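/- arXiv:2301.07871 — 5 statements merged into one kernel-verified Lean document; each statement's English description precedes it below -/
import Mathlib

section
/- Finite-blocklength achievability bound for lossless source coding: let X^n = (X_1,…,X_n) be drawn i.i.d. from a pmf P_X on a finite alphabet 𝒳. For every n, M ∈ ℕ there exists an (n,M)-code (f,φ) whose error probability satisfies P_{e,n} ≤ Pr{ ∑_{i=1}^n ı(X_i|P_X) ≥ log M }. -/
/-!
Encode injectively the (at most `M`) strings of probability greater than `1/M` and let every
other string be decoded wrongly. Each wrongly decoded string of positive probability then has
probability at most `1/M`, i.e. entropy density at least `log M`.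
-/

open scoped BigOperators

noncomputable section

/-- i.i.d. product pmf on length-`n` strings. -/
def iidP {α : Type*} [Fintype α] (p : α → ℝ) (n : ℕ) : (Fin n → α) → ℝ :=
  fun xs => ∏ i, p (xs i)

/-- Probability of an event under a pmf on a finite space. -/
def Pr {Ω : Type*} [Fintype Ω] (μ : Ω → ℝ) (A : Set Ω) : ℝ :=
  ∑ ω, A.indicator μ ω

/-- Entropy density `ı(x|P) = −log P(x)`. -/
def entDensity {α : Type*} (p : α → ℝ) (x : α) : ℝ := -Real.log (p x)

open Finset

section iid

variable {α : Type*} [Fintype α] {p : α → ℝ} {n : ℕ}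

lemma iidP_nonneg (hp : ∀ x, 0 ≤ p x) (xs : Fin n → α) : 0 ≤ iidP p n xs :=
  prod_nonneg fun i _ => hp (xs i)

lemma sum_iidP (hp : ∑ x, p x = 1) : ∑ xs, iidP p n xs = 1 := by
  classical
  simp only [iidP, ← Fintype.prod_sum, hp, prod_const_one]

lemma sum_entDensity_eq_entDensity_iidP {xs : Fin n → α} (h : iidP p n xs ≠ 0) :
    ∑ i, entDensity p (xs i) = entDensity (iidP p n) xs := by
  have hfac : ∀ i ∈ univ, p (xs i) ≠ 0 := fun i _ hi => h (prod_eq_zero (mem_univ i) hi)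
  simp only [entDensity, iidP, Real.log_prod hfac, sum_neg_distrib]

end iid

lemma log_le_entDensity_of_le_inv {α : Type*} {p : α → ℝ} {x : α} {c : ℝ}
    (hx : 0 < p x) (hc : p x ≤ c⁻¹) : Real.log c ≤ entDensity p x := by
  have := Real.log_le_log hx hc
  rw [Real.log_inv] at this
  unfold entDensity
  linarith

section finite

variable {Ω : Type*} [Fintype Ω] {μ : Ω → ℝ}

lemma card_filter_inv_lt_le (hμ0 : ∀ ω, 0 ≤ μ ω) (hμ1 : ∑ ω, μ ω ≤ 1) {M : ℕ} (hM : 0 < M) :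
    #{ω | (M : ℝ)⁻¹ < μ ω} ≤ M := by
  set T := ({ω | (M : ℝ)⁻¹ < μ ω} : Finset Ω)
  have hMpos : (0 : ℝ) < M := by exact_mod_cast hM
  have hmass : #T * (M : ℝ)⁻¹ ≤ ∑ ω ∈ T, μ ω := by
    rw [← nsmul_eq_mul]
    exact card_nsmul_le_sum T μ _ fun ω hω => (mem_filter.mp hω).2.le
  have hT : ∑ ω ∈ T, μ ω ≤ 1 :=
    (sum_le_sum_of_subset_of_nonneg (subset_univ T) fun ω _ _ => hμ0 ω).trans hμ1
  suffices (#T : ℝ) ≤ M by exact_mod_cast this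
  calc (#T : ℝ) = #T * (M : ℝ)⁻¹ * M := by field_simp
    _ ≤ 1 * M := by gcongr; exact hmass.trans hT
    _ = M := one_mul _

lemma Pr_mono_of_forall_ne_zero (hμ : ∀ ω, 0 ≤ μ ω) {A B : Set Ω}
    (h : ∀ ω ∈ A, μ ω ≠ 0 → ω ∈ B) : Pr μ A ≤ Pr μ B := by
  have hB : ∀ ω, 0 ≤ B.indicator μ ω := Set.indicator_nonneg fun ω _ => hμ ω
  refine sum_le_sum fun ω _ => ?_
  by_cases hA : ω ∈ A
  · rcases eq_or_ne (μ ω) 0 with h0 | h0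
    · rw [Set.indicator_of_mem hA, h0]
      exact hB ω
    · rw [Set.indicator_of_mem hA, Set.indicator_of_mem (h ω hA h0)]
  · rw [Set.indicator_of_notMem hA]
    exact hB ω

end finite

lemma exists_leftInvOn_of_card_le {Ω : Type*} [Nonempty Ω] (T : Finset Ω) {M : ℕ}
    (hM : 0 < M) (hT : #T ≤ M) :
    ∃ (f : Ω → Fin M) (φ : Fin M → Ω), Set.LeftInvOn φ f T := by
  classical
  obtain ⟨e⟩ : Nonempty (T ↪ Fin M) :=
    Function.Embedding.nonempty_of_card_le (by simpa using hT)
  let f : Ω → Fin M := fun ω => if h : ω ∈ T then e ⟨ω, h⟩ else ⟨0, hM⟩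
  have hinj : Set.InjOn f T := fun a ha b hb hab => by
    simp only [f, dif_pos (mem_coe.mp ha), dif_pos (mem_coe.mp hb)] at hab
    exact congrArg Subtype.val (e.injective hab)
  exact ⟨f, Function.invFunOn f T, hinj.leftInvOn_invFunOn⟩

/-- **Achievability bound for lossless source coding.**
For any source pmf `P` on a finite alphabet, any blocklength `n` and any number of
codewords `M ≥ 1`, there exists an `(n,M)`-code `(f,φ)` whose error probability is at most
`Pr{∑ᵢ ı(Xᵢ|P) ≥ log M}`. -/
theorem lossless_achievability
    {𝒳 : Type} [Fintype 𝒳] (P : 𝒳 → ℝ)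
    (hP0 : ∀ x, 0 ≤ P x) (hP1 : ∑ x, P x = 1)
    (n M : ℕ) (hM : 0 < M) :
    ∃ (f : (Fin n → 𝒳) → Fin M) (φ : Fin M → (Fin n → 𝒳)),
      Pr (iidP P n) {xs | φ (f xs) ≠ xs} ≤
        Pr (iidP P n) {xs | Real.log M ≤ ∑ i, entDensity P (xs i)} := by
  obtain ⟨x, -, -⟩ := exists_ne_zero_of_sum_ne_zero (hP1.symm ▸ one_ne_zero : ∑ x, P x ≠ 0)
  have : Nonempty 𝒳 := ⟨x⟩
  obtain ⟨f, φ, hφ⟩ := exists_leftInvOn_of_card_le _ hM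
    (card_filter_inv_lt_le (iidP_nonneg hP0) (sum_iidP hP1).le hM)
  -- Null strings must be set aside: there `log 0 = 0` makes the entropy density junk.
  refine ⟨f, φ, Pr_mono_of_forall_ne_zero (iidP_nonneg hP0) fun xs herr h0 => ?_⟩
  have hlight : iidP P n xs ≤ (M : ℝ)⁻¹ := by
    by_contra! hheavy
    exact herr (hφ (by simpa using hheavy))
  rw [Set.mem_ofPred_eq, sum_entDensity_eq_entDensity_iidP h0]
  exact log_le_entDensity_of_le_inv ((iidP_nonneg hP0 xs).lt_of_ne' h0) hlight

end
end

section
/- Finite-blocklength converse bound for lossless source coding: let X^n = (X_1,…,X_n) be drawn i.i.d. from a pmf P_X on a finite alphabet 𝒳. For every n, M ∈ ℕ and every γ > 0, every (n,M)-code satisfies P_{e,n} ≥ Pr{ ∑_{i=1}^n ı(X_i|P_X) ≥ log M + nγ } − exp(−nγ). -/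
/-!
A correctly decoded string is a fixed point of `φ ∘ f`, hence lies in the range of `φ`, so
there are at most `M` of them. On the event `∑ ı(Xᵢ) ≥ log M + nγ` every string has probability
at most `exp(-nγ) / M`, so the correctly decoded part of that event has probability at most
`exp(-nγ)`; the rest of the event is contained in the error event.
-/

open scoped BigOperators

noncomputable section

section Pr

variable {Ω : Type*} [Fintype Ω] {μ : Ω → ℝ}

theorem Pr_le_Pr_inter_add_Pr_compl (hμ : ∀ ω, 0 ≤ μ ω) (A B : Set Ω) :
    Pr μ A ≤ Pr μ (A ∩ B) + Pr μ Bᶜ := by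
  rw [Pr, Pr, Pr, ← Finset.sum_add_distrib]
  refine Finset.sum_le_sum fun ω _ => ?_
  by_cases hA : ω ∈ A <;> by_cases hB : ω ∈ B <;> simp [hA, hB, hμ ω]

theorem Pr_le_ncard_mul {A : Set Ω} {c : ℝ} (hc : ∀ ω ∈ A, μ ω ≤ c) :
    Pr μ A ≤ A.ncard * c := by
  classical
  calc Pr μ A = ∑ ω ∈ A.toFinset, μ ω := by
        rw [Pr, ← Finset.sum_indicator_subset μ (Finset.subset_univ _), Set.coe_toFinset]
    _ ≤ A.toFinset.card • c := Finset.sum_le_card_nsmul _ _ _ fun ω hω => hc ω (by simpa using hω)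
    _ = A.ncard * c := by rw [Set.ncard_eq_toFinset_card', nsmul_eq_mul]

end Pr

theorem ncard_fixedPoints_comp_le {α β : Type*} [Finite β] (f : α → β) (φ : β → α) :
    (Function.fixedPoints (φ ∘ f)).ncard ≤ Nat.card β :=
  calc (Function.fixedPoints (φ ∘ f)).ncard ≤ (Set.range φ).ncard :=
        Set.ncard_le_ncard (fun x (hx : φ (f x) = x) => ⟨f x, hx⟩) (Set.finite_range φ)
    _ = Nat.card (Set.range φ) := (Nat.card_coe_set_eq _).symm
    _ ≤ Nat.card β := Finite.card_range_le φ

theorem le_exp_neg_entDensity {α : Type*} (p : α → ℝ) (x : α) :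
    p x ≤ Real.exp (-entDensity p x) := by
  rw [entDensity, neg_neg]
  exact Real.le_exp_log _

theorem iidP_le_exp_neg_sum_entDensity {α : Type*} [Fintype α] {p : α → ℝ}
    (hp : ∀ x, 0 ≤ p x) (n : ℕ) (xs : Fin n → α) :
    iidP p n xs ≤ Real.exp (-∑ i, entDensity p (xs i)) := by
  rw [iidP, ← Finset.sum_neg_distrib, Real.exp_sum]
  exact Finset.prod_le_prod (fun i _ => hp _) fun i _ => le_exp_neg_entDensity p (xs i)

-- An inequality rather than an equation only because `Real.log 0 = 0`.
theorem natCast_mul_exp_neg_log_add_le (M : ℕ) (t : ℝ) :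
    M * Real.exp (-(Real.log M + t)) ≤ Real.exp (-t) := by
  rcases M.eq_zero_or_pos with rfl | hM
  · simpa using (Real.exp_pos _).le
  · have hM' : (0 : ℝ) < M := Nat.cast_pos.mpr hM
    rw [neg_add, Real.exp_add, Real.exp_neg, Real.exp_log hM', ← mul_assoc,
      mul_inv_cancel₀ hM'.ne', one_mul]

theorem lossless_converse_general
    {𝒳 : Type} [Fintype 𝒳] (P : 𝒳 → ℝ)
    (hP0 : ∀ x, 0 ≤ P x)
    (n M : ℕ) (γ : ℝ)
    (f : (Fin n → 𝒳) → Fin M) (φ : Fin M → (Fin n → 𝒳)) :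
    Pr (iidP P n) {xs | Real.log M + n * γ ≤ ∑ i, entDensity P (xs i)}
        - Real.exp (-(n * γ)) ≤
      Pr (iidP P n) {xs | φ (f xs) ≠ xs} := by
  set A : Set (Fin n → 𝒳) := {xs | Real.log M + n * γ ≤ ∑ i, entDensity P (xs i)}
  set C := Function.fixedPoints (φ ∘ f)
  have hμ : ∀ xs, 0 ≤ iidP P n xs := fun xs => Finset.prod_nonneg fun i _ => hP0 _
  have hsmall : ∀ xs ∈ A ∩ C, iidP P n xs ≤ Real.exp (-(Real.log M + n * γ)) := fun xs hxs =>
    (iidP_le_exp_neg_sum_entDensity hP0 n xs).trans (Real.exp_le_exp.mpr (neg_le_neg hxs.1))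
  have hcorrect : Pr (iidP P n) (A ∩ C) ≤ Real.exp (-(n * γ)) :=
    calc Pr (iidP P n) (A ∩ C) ≤ (A ∩ C).ncard * Real.exp (-(Real.log M + n * γ)) :=
          Pr_le_ncard_mul hsmall
      _ ≤ M * Real.exp (-(Real.log M + n * γ)) := by
          gcongr
          calc (A ∩ C).ncard ≤ C.ncard := Set.ncard_le_ncard Set.inter_subset_right
            _ ≤ M := by simpa using ncard_fixedPoints_comp_le f φ
      _ ≤ Real.exp (-(n * γ)) := natCast_mul_exp_neg_log_add_le M _
  calc Pr (iidP P n) A - Real.exp (-(n * γ))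
      ≤ Pr (iidP P n) (A ∩ C) + Pr (iidP P n) Cᶜ - Real.exp (-(n * γ)) := by
        gcongr
        exact Pr_le_Pr_inter_add_Pr_compl hμ A C
    _ ≤ Pr (iidP P n) Cᶜ := by linarith

/-- **Converse bound for lossless source coding.**
For any source pmf `P` on a finite alphabet, any `n, M`, any `γ > 0` and any
`(n,M)`-code `(f,φ)`, the error probability is at least
`Pr{∑ᵢ ı(Xᵢ|P) ≥ log M + nγ} − exp(−nγ)`. -/
theorem lossless_converse
    {𝒳 : Type} [Fintype 𝒳] (P : 𝒳 → ℝ)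
    (hP0 : ∀ x, 0 ≤ P x) (hP1 : ∑ x, P x = 1)
    (n M : ℕ) (γ : ℝ) (hγ : 0 < γ)
    (f : (Fin n → 𝒳) → Fin M) (φ : Fin M → (Fin n → 𝒳)) :
    Pr (iidP P n) {xs | Real.log M + n * γ ≤ ∑ i, entDensity P (xs i)}
        - Real.exp (-(n * γ)) ≤
      Pr (iidP P n) {xs | φ (f xs) ≠ xs} :=
  lossless_converse_general P hP0 n M γ f φ

end
end

section
/- Random-coding achievability bound for the rate-distortion problem: for every probability distribution P_{X̂} on the reproduction alphabet X̂ and every n, M ∈ ℕ, there exists an (n,M)-code whose excess-distortion probability satisfies P_{e,n}(D) ≤ E_{X^n ∼ P_X^n}[ (1 − P_{X̂}^n(B_D(X^n)))^M ], where P_{X̂}^n is the n-fold product of P_{X̂}. -/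
/-!
Random-coding achievability bound for the rate-distortion problem
(Kostina–Verdú, Theorem `ach:fbl`).
-/

open scoped BigOperators

noncomputable section

/-- Average per-letter distortion of a block. -/
def distn {α β : Type*} {n : ℕ} (d : α → β → ℝ) (xs : Fin n → α) (ys : Fin n → β) : ℝ :=
  (∑ i, d (xs i) (ys i)) / n

/-- **Random-coding achievability bound for the rate-distortion problem.**
For any reproduction pmf `Q` on `Xh` and any `n, M ≥ 1`, there exists an `(n,M)`-code
whose excess-distortion probability satisfies
`P_{e,n}(D) ≤ E[(1 − Qⁿ(B_D(Xⁿ)))^M]`. -/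
theorem rd_achievability
    {𝒳 Xh : Type} [Fintype 𝒳] [Fintype Xh] [Nonempty Xh]
    (P : 𝒳 → ℝ) (hP0 : ∀ x, 0 ≤ P x) (hP1 : ∑ x, P x = 1)
    (d : 𝒳 → Xh → ℝ) (hd : ∀ x y, 0 ≤ d x y)
    (D : ℝ) (hD : 0 ≤ D)
    (Q : Xh → ℝ) (hQ0 : ∀ y, 0 ≤ Q y) (hQ1 : ∑ y, Q y = 1)
    (n M : ℕ) (hM : 0 < M) :
    ∃ (f : (Fin n → 𝒳) → Fin M) (φ : Fin M → (Fin n → Xh)),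
      Pr (iidP P n) {xs | D < distn d xs (φ (f xs))} ≤
        ∑ xs : Fin n → 𝒳, iidP P n xs *
          (1 - Pr (iidP Q n) {ys | distn d xs ys ≤ D}) ^ M := by
  classical
  have hMne : Nonempty (Fin M) := ⟨⟨0, hM⟩⟩
  -- indicator of "outside the ball"
  set e : (Fin n → 𝒳) → (Fin n → Xh) → ℝ :=
    fun xs c => if D < distn d xs c then 1 else 0 with he
  have hQn0 : ∀ c : Fin n → Xh, 0 ≤ iidP Q n c :=
    fun c => Finset.prod_nonneg (fun i _ => hQ0 _)
  have hPn0 : ∀ xs : Fin n → 𝒳, 0 ≤ iidP P n xs :=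
    fun xs => Finset.prod_nonneg (fun i _ => hP0 _)
  have hQnsum : ∑ c : Fin n → Xh, iidP Q n c = 1 := by
    simp only [iidP]
    rw [← Fintype.piFinset_univ, ← Finset.prod_univ_sum]
    simp [hQ1]
  -- key per-source-string identity
  have hinner : ∀ xs : Fin n → 𝒳,
      ∑ c : Fin n → Xh, iidP Q n c * e xs c
        = 1 - Pr (iidP Q n) {ys | distn d xs ys ≤ D} := by
    intro xs
    have : Pr (iidP Q n) {ys | distn d xs ys ≤ D}
        = ∑ c : Fin n → Xh, (iidP Q n c - iidP Q n c * e xs c) := by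
      unfold Pr
      refine Finset.sum_congr rfl (fun c _ => ?_)
      by_cases h : distn d xs c ≤ D
      · simp [Set.indicator, h, he, not_lt.2 h]
      · simp [Set.indicator, h, he, lt_of_not_ge h]
    rw [this, Finset.sum_sub_distrib, hQnsum]
    ring
  -- weights over codebooks
  set w : (Fin M → (Fin n → Xh)) → ℝ := fun φ => ∏ j, iidP Q n (φ j) with hw
  have hw0 : ∀ φ, 0 ≤ w φ := fun φ => Finset.prod_nonneg (fun j _ => hQn0 _)
  have hwsum : ∑ φ : Fin M → (Fin n → Xh), w φ = 1 := by
    simp only [hw]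
    rw [← Fintype.piFinset_univ, ← Finset.prod_univ_sum]
    simp [hQnsum]
  -- the error functional given codebook φ (with optimal decoding)
  set g : (Fin M → (Fin n → Xh)) → ℝ :=
    fun φ => ∑ xs : Fin n → 𝒳, iidP P n xs * ∏ j, e xs (φ j) with hg
  set RHS : ℝ := ∑ xs : Fin n → 𝒳, iidP P n xs *
      (1 - Pr (iidP Q n) {ys | distn d xs ys ≤ D}) ^ M with hRHS
  have key : ∑ φ : Fin M → (Fin n → Xh), w φ * g φ = RHS := by
    simp only [hg, hw, Finset.mul_sum]
    rw [Finset.sum_comm]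
    refine Finset.sum_congr rfl (fun xs _ => ?_)
    have : ∀ φ : Fin M → (Fin n → Xh),
        (∏ j, iidP Q n (φ j)) * (iidP P n xs * ∏ j, e xs (φ j))
          = iidP P n xs * ∏ j, (iidP Q n (φ j) * e xs (φ j)) := by
      intro φ
      rw [Finset.prod_mul_distrib]; ring
    rw [Finset.sum_congr rfl (fun φ _ => this φ), ← Finset.mul_sum]
    congr 1
    rw [← Fintype.piFinset_univ,
      ← Finset.prod_univ_sum (fun _ : Fin M => (Finset.univ : Finset (Fin n → Xh)))
        (fun _ c => iidP Q n c * e xs c)]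
    rw [Finset.prod_congr rfl (fun j _ => hinner xs), Finset.prod_const]
    simp
  -- pick a good codebook
  have hex : ∃ φ : Fin M → (Fin n → Xh), g φ ≤ RHS := by
    by_contra hcon
    push_neg at hcon
    have hpos : ∃ φ : Fin M → (Fin n → Xh), 0 < w φ := by
      by_contra hz
      push_neg at hz
      have : ∑ φ : Fin M → (Fin n → Xh), w φ = 0 :=
        Finset.sum_eq_zero (fun φ _ => le_antisymm (hz φ) (hw0 φ))
      rw [hwsum] at this; norm_num at this
    obtain ⟨φ0, hφ0⟩ := hpos
    have hlt : RHS < ∑ φ : Fin M → (Fin n → Xh), w φ * g φ := by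
      have : ∑ φ : Fin M → (Fin n → Xh), w φ * RHS
          < ∑ φ : Fin M → (Fin n → Xh), w φ * g φ := by
        refine Finset.sum_lt_sum (fun φ _ => ?_) ⟨φ0, Finset.mem_univ _, ?_⟩
        · exact mul_le_mul_of_nonneg_left (le_of_lt (hcon φ)) (hw0 φ)
        · exact mul_lt_mul_of_pos_left (hcon φ0) hφ0
      calc RHS = (∑ φ : Fin M → (Fin n → Xh), w φ) * RHS := by rw [hwsum, one_mul]
        _ = ∑ φ : Fin M → (Fin n → Xh), w φ * RHS := by rw [Finset.sum_mul]
        _ < _ := this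
    rw [key] at hlt
    exact lt_irrefl _ hlt
  obtain ⟨φ, hφ⟩ := hex
  -- encoder: pick a codeword within distortion D if one exists
  refine ⟨fun xs => if h : ∃ j, distn d xs (φ j) ≤ D then h.choose
      else Classical.arbitrary (Fin M), φ, ?_⟩
  have hsub : {xs : Fin n → 𝒳 | D < distn d xs (φ
      ((fun xs => if h : ∃ j, distn d xs (φ j) ≤ D then h.choose
        else Classical.arbitrary (Fin M)) xs))}
      ⊆ {xs : Fin n → 𝒳 | ∀ j, D < distn d xs (φ j)} := by
    intro xs hxs j
    by_contra hj
    push_neg at hj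
    have hexj : ∃ j, distn d xs (φ j) ≤ D := ⟨j, hj⟩
    simp only [Set.mem_setOf_eq, dif_pos hexj] at hxs
    exact absurd hexj.choose_spec (not_le.2 hxs)
  have hmono : Pr (iidP P n) {xs : Fin n → 𝒳 | D < distn d xs (φ
      ((fun xs => if h : ∃ j, distn d xs (φ j) ≤ D then h.choose
        else Classical.arbitrary (Fin M)) xs))}
      ≤ Pr (iidP P n) {xs : Fin n → 𝒳 | ∀ j, D < distn d xs (φ j)} := by
    refine Finset.sum_le_sum (fun xs _ => ?_)
    exact Set.indicator_le_indicator_of_subset hsub (fun x => hPn0 x) xs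
  refine le_trans hmono ?_
  have : Pr (iidP P n) {xs : Fin n → 𝒳 | ∀ j, D < distn d xs (φ j)} = g φ := by
    unfold Pr
    refine Finset.sum_congr rfl (fun xs _ => ?_)
    by_cases h : ∀ j, D < distn d xs (φ j)
    · have : ∏ j, e xs (φ j) = 1 := by
        refine Finset.prod_eq_one (fun j _ => ?_)
        simp [he, h j]
      simp [Set.indicator, h, this]
    · push_neg at h
      obtain ⟨j, hj⟩ := h
      have : ∏ j, e xs (φ j) = 0 := by
        refine Finset.prod_eq_zero (Finset.mem_univ j) ?_
        simp [he, not_lt.2 hj]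
      simp only [Set.indicator, this, mul_zero]
      rw [if_neg]
      simp only [Set.mem_setOf_eq, not_forall]
      exact ⟨j, not_lt.2 hj⟩
  rw [this]
  exact hφ

end
end

section
/- Finite-blocklength converse bound for the rate-distortion problem: under the stated regularity assumptions, for every γ > 0 and every n, M ∈ ℕ, every (n,M)-code satisfies P_{e,n}(D) ≥ Pr{ ∑_{i=1}^n ȷ(X_i|D,P_X) ≥ log M + nγ } − exp(−nγ). -/
/-!
Finite-blocklength converse bound for the rate-distortion problem
(Kostina–Verdú, Theorem `converse:fbl`).
-/

open scoped BigOperators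

noncomputable section

/-- A conditional pmf (test channel). -/
def IsChannel {α β : Type*} [Fintype β] (W : α → β → ℝ) : Prop :=
  ∀ a, (∀ b, 0 ≤ W a b) ∧ ∑ b, W a b = 1

/-- Mutual information `I(p, W)`. -/
def mutInfo {α β : Type*} [Fintype α] [Fintype β] (p : α → ℝ) (W : α → β → ℝ) : ℝ :=
  ∑ a, ∑ b, p a * W a b * Real.log (W a b / (∑ a', p a' * W a' b))

/-- The rate-distortion function `R(p, D)`. -/
def RDfun {α β : Type*} [Fintype α] [Fintype β] (p : α → ℝ) (d : α → β → ℝ) (D : ℝ) : ℝ :=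
  sInf {r | ∃ W : α → β → ℝ, IsChannel W ∧
    (∑ a, ∑ b, p a * W a b * d a b) ≤ D ∧ r = mutInfo p W}

/-- Output marginal induced by a source pmf and a channel. -/
def outMarg {α β : Type*} [Fintype α] (p : α → ℝ) (W : α → β → ℝ) : β → ℝ :=
  fun b => ∑ a, p a * W a b

/-- The `D`-tilted information density
`ȷ(x|D,P) = −log E_{X̂∼Q}[exp(λ D − λ d(x,X̂))]`. -/
def dtilted {α β : Type*} [Fintype β] (d : α → β → ℝ) (D : ℝ) (Q : β → ℝ) (lam : ℝ) :
    α → ℝ :=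
  fun x => -Real.log (∑ y, Q y * Real.exp (lam * D - lam * d x y))


set_option linter.unusedSectionVars false
set_option linter.unusedVariables false
open scoped Topology

lemma log_flip (a b : ℝ) : Real.log (a / b) = - Real.log (b / a) := by
  rw [← Real.log_inv, inv_div]

lemma one_sub_inv_le_log {u : ℝ} (hu : 0 < u) : 1 - u⁻¹ ≤ Real.log u :=
  Real.one_sub_inv_le_log_of_pos hu

/-- Gibbs inequality / log-sum. -/
lemma gibbs {β : Type*} [Fintype β] (w q : β → ℝ) (hw : ∀ b, 0 ≤ w b)
    (hq : ∀ b, 0 ≤ q b) (hac : ∀ b, q b = 0 → w b = 0) (hw1 : ∑ b, w b = 1)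
    (hS : 0 < ∑ b, q b) :
    ∑ b, w b * Real.log (q b / w b) ≤ Real.log (∑ b, q b) := by
  set S := ∑ b, q b with hSdef
  have key : ∀ b : β, w b * Real.log (q b / w b) ≤ w b * Real.log S + (q b / S - w b) := by
    intro b
    rcases eq_or_lt_of_le (hw b) with h0 | hpos
    · rw [← h0]
      simp only [zero_mul, zero_add, sub_zero]
      exact div_nonneg (hq b) hS.le
    · have hqb : 0 < q b := by
        rcases eq_or_lt_of_le (hq b) with h | h
        · exact absurd (hac b h.symm) (ne_of_gt hpos)
        · exact h
      have h1 : Real.log (q b / (w b * S)) ≤ q b / (w b * S) - 1 :=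
        Real.log_le_sub_one_of_pos (by positivity)
      have h2 : Real.log (q b / w b) = Real.log (q b / (w b * S)) + Real.log S := by
        rw [div_mul_eq_div_div, Real.log_div (by positivity) (ne_of_gt hS)]
        ring
      have h4 : w b * (q b / (w b * S)) = q b / S := by
        field_simp
      nlinarith [mul_le_mul_of_nonneg_left h1 hpos.le]
  calc ∑ b, w b * Real.log (q b / w b)
      ≤ ∑ b, (w b * Real.log S + (q b / S - w b)) := Finset.sum_le_sum fun b _ => key b
    _ = (∑ b, w b) * Real.log S + ((∑ b, q b) / S - ∑ b, w b) := by
        rw [Finset.sum_add_distrib, Finset.sum_sub_distrib, ← Finset.sum_mul,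
          ← Finset.sum_div]
    _ = Real.log S := by
        rw [hw1, ← hSdef, div_self (ne_of_gt hS)]; ring

/-- two-point log-sum inequality -/
lemma logsum2 (a₁ a₂ b₁ b₂ : ℝ) (ha₁ : 0 ≤ a₁) (ha₂ : 0 ≤ a₂)
    (hb₁ : 0 ≤ b₁) (hb₂ : 0 ≤ b₂) (h1 : b₁ = 0 → a₁ = 0) (h2 : b₂ = 0 → a₂ = 0) :
    (a₁ + a₂) * Real.log ((a₁ + a₂) / (b₁ + b₂)) ≤
      a₁ * Real.log (a₁ / b₁) + a₂ * Real.log (a₂ / b₂) := by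
  have single : ∀ a b c : ℝ, 0 ≤ a → 0 ≤ b → 0 ≤ c → (b = 0 → a = 0) →
      a * Real.log (a / (b + c)) ≤ a * Real.log (a / b) := by
    intro a b c ha hb hc hab
    rcases eq_or_lt_of_le ha with h0 | ha'
    · rw [← h0]; simp
    · have hb' : 0 < b := by
        rcases eq_or_lt_of_le hb with h | h
        · exact absurd (hab h.symm) (ne_of_gt ha')
        · exact h
      apply mul_le_mul_of_nonneg_left _ ha
      apply Real.log_le_log (by positivity)
      exact div_le_div_of_nonneg_left ha (by positivity) (by linarith)
  rcases eq_or_lt_of_le ha₁ with h01 | ha₁'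
  · rw [← h01, zero_add, zero_mul, zero_add]
    have := single a₂ b₂ b₁ ha₂ hb₂ hb₁ h2
    calc a₂ * Real.log (a₂ / (b₁ + b₂)) = a₂ * Real.log (a₂ / (b₂ + b₁)) := by rw [add_comm b₁]
      _ ≤ a₂ * Real.log (a₂ / b₂) := this
  rcases eq_or_lt_of_le ha₂ with h02 | ha₂'
  · rw [← h02, add_zero, zero_mul, add_zero]
    exact single a₁ b₁ b₂ ha₁ hb₁ hb₂ h1
  -- both positive
  have hb₁' : 0 < b₁ := by
    rcases eq_or_lt_of_le hb₁ with h | h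
    · exact absurd (h1 h.symm) (ne_of_gt ha₁')
    · exact h
  have hb₂' : 0 < b₂ := by
    rcases eq_or_lt_of_le hb₂ with h | h
    · exact absurd (h2 h.symm) (ne_of_gt ha₂')
    · exact h
  have key : ∀ a b : ℝ, 0 < a → 0 < b →
      a - b * (a₁ + a₂) / (b₁ + b₂) ≤ a * Real.log (a / b) - a * Real.log ((a₁+a₂)/(b₁+b₂)) := by
    intro a b ha hb
    have hu : (0:ℝ) < (a * (b₁ + b₂)) / (b * (a₁ + a₂)) := by positivity
    have hlog : Real.log ((a * (b₁ + b₂)) / (b * (a₁ + a₂)))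
        = Real.log (a / b) - Real.log ((a₁+a₂)/(b₁+b₂)) := by
      rw [Real.log_div (by positivity) (by positivity), Real.log_div (ne_of_gt ha) (ne_of_gt hb),
        Real.log_div (by positivity) (by positivity), Real.log_mul (ne_of_gt ha) (by positivity),
        Real.log_mul (ne_of_gt hb) (by positivity)]
      ring
    have h5 := one_sub_inv_le_log hu
    have hinv : ((a * (b₁ + b₂)) / (b * (a₁ + a₂)))⁻¹ = (b * (a₁ + a₂)) / (a * (b₁ + b₂)) := by
      rw [inv_div]
    rw [hinv] at h5
    have h6 : a - b * (a₁ + a₂) / (b₁ + b₂) ≤ a * Real.log (a * (b₁ + b₂) / (b * (a₁ + a₂))) := by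
      have := mul_le_mul_of_nonneg_left h5 ha.le
      calc a - b * (a₁ + a₂) / (b₁ + b₂) = a * (1 - b * (a₁ + a₂) / (a * (b₁ + b₂))) := by
            field_simp
        _ ≤ a * Real.log (a * (b₁ + b₂) / (b * (a₁ + a₂))) := this
    rw [hlog, mul_sub] at h6
    exact h6
  have k1 := key a₁ b₁ ha₁' hb₁'
  have k2 := key a₂ b₂ ha₂' hb₂'
  have hsum : (a₁ - b₁ * (a₁ + a₂) / (b₁ + b₂)) + (a₂ - b₂ * (a₁ + a₂) / (b₁ + b₂)) = 0 := by
    field_simp; ring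
  nlinarith [k1, k2]

section MI
variable {α β : Type*} [Fintype α] [Fintype β]

lemma marg_zero (p : α → ℝ) (hp0 : ∀ a, 0 ≤ p a) (W : α → β → ℝ)
    (hW : ∀ a b, 0 ≤ W a b) {a : α} {b : β} (hpa : 0 < p a)
    (h : ∑ a', p a' * W a' b = 0) : W a b = 0 := by
  have h2 := (Finset.sum_eq_zero_iff_of_nonneg
    (fun a' _ => mul_nonneg (hp0 a') (hW a' b))).mp h a (Finset.mem_univ a)
  rcases mul_eq_zero.mp h2 with h3 | h3
  · exact absurd h3 (ne_of_gt hpa)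
  · exact h3

lemma outMarg_sum (p : α → ℝ) (hp1 : ∑ a, p a = 1) (W : α → β → ℝ) (hW : IsChannel W) :
    ∑ b, (∑ a', p a' * W a' b) = 1 := by
  rw [Finset.sum_comm]
  calc ∑ a', ∑ b, p a' * W a' b = ∑ a', p a' * ∑ b, W a' b := by
        apply Finset.sum_congr rfl; intro a' _; rw [Finset.mul_sum]
    _ = ∑ a', p a' := by
        apply Finset.sum_congr rfl; intro a' _; rw [(hW a').2, mul_one]
    _ = 1 := hp1

lemma mutInfo_nonneg (p : α → ℝ) (hp0 : ∀ a, 0 ≤ p a) (hp1 : ∑ a, p a = 1)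
    (W : α → β → ℝ) (hW : IsChannel W) : 0 ≤ mutInfo p W := by
  unfold mutInfo
  apply Finset.sum_nonneg
  intro a _
  rcases eq_or_lt_of_le (hp0 a) with h0 | hpa
  · apply Finset.sum_nonneg; intro b _; rw [← h0]; simp
  · have hsum : ∑ b, p a * W a b * Real.log (W a b / (∑ a', p a' * W a' b))
        = p a * ∑ b, W a b * Real.log (W a b / (∑ a', p a' * W a' b)) := by
      rw [Finset.mul_sum]; apply Finset.sum_congr rfl; intro b _; ring
    rw [hsum]
    apply mul_nonneg hpa.le
    have hg := gibbs (w := W a) (q := fun b => ∑ a', p a' * W a' b) (hW a).1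
      (fun b => Finset.sum_nonneg fun a' _ => mul_nonneg (hp0 a') ((hW a').1 b))
      (fun b hb => marg_zero p hp0 W (fun a' => (hW a').1) hpa hb) (hW a).2
      (by rw [outMarg_sum p hp1 W hW]; norm_num)
    rw [outMarg_sum p hp1 W hW, Real.log_one] at hg
    have flip : ∑ b, W a b * Real.log (W a b / (∑ a', p a' * W a' b))
        = - ∑ b, W a b * Real.log ((∑ a', p a' * W a' b) / W a b) := by
      rw [← Finset.sum_neg_distrib]
      apply Finset.sum_congr rfl; intro b _; rw [log_flip]; ring
    rw [flip]; linarith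

lemma mutInfo_convex (p : α → ℝ) (hp0 : ∀ a, 0 ≤ p a)
    (W₁ W₂ : α → β → ℝ) (h1 : IsChannel W₁) (h2 : IsChannel W₂)
    (θ : ℝ) (hθ0 : 0 ≤ θ) (hθ1 : θ ≤ 1) :
    mutInfo p (fun a b => θ * W₁ a b + (1 - θ) * W₂ a b) ≤
      θ * mutInfo p W₁ + (1 - θ) * mutInfo p W₂ := by
  have hθ1' : 0 ≤ 1 - θ := by linarith
  have hmarg : ∀ b, (∑ a', p a' * (θ * W₁ a' b + (1 - θ) * W₂ a' b))
      = θ * (∑ a', p a' * W₁ a' b) + (1 - θ) * (∑ a', p a' * W₂ a' b) := by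
    intro b
    rw [Finset.mul_sum, Finset.mul_sum, ← Finset.sum_add_distrib]
    apply Finset.sum_congr rfl; intro a' _; ring
  have scale : ∀ (t w q : ℝ), 0 ≤ t → (t * w) * Real.log ((t * w) / (t * q)) =
      t * (w * Real.log (w / q)) := by
    intro t w q ht
    rcases eq_or_lt_of_le ht with h | h
    · rw [← h]; simp
    · rw [mul_div_mul_left _ _ (ne_of_gt h)]; ring
  unfold mutInfo
  rw [Finset.mul_sum, Finset.mul_sum, ← Finset.sum_add_distrib]
  apply Finset.sum_le_sum
  intro a _
  rw [Finset.mul_sum, Finset.mul_sum, ← Finset.sum_add_distrib]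
  apply Finset.sum_le_sum
  intro b _
  rcases eq_or_lt_of_le (hp0 a) with h0 | hpa
  · rw [← h0]; simp
  · rw [hmarg b]
    have hls := logsum2 (θ * W₁ a b) ((1 - θ) * W₂ a b)
      (θ * (∑ a', p a' * W₁ a' b)) ((1 - θ) * (∑ a', p a' * W₂ a' b))
      (mul_nonneg hθ0 ((h1 a).1 b)) (mul_nonneg hθ1' ((h2 a).1 b))
      (mul_nonneg hθ0 (Finset.sum_nonneg fun a' _ => mul_nonneg (hp0 a') ((h1 a').1 b)))
      (mul_nonneg hθ1' (Finset.sum_nonneg fun a' _ => mul_nonneg (hp0 a') ((h2 a').1 b)))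
      (by intro h
          rcases mul_eq_zero.mp h with h | h
          · rw [h, zero_mul]
          · rw [marg_zero p hp0 W₁ (fun a' => (h1 a').1) hpa h, mul_zero])
      (by intro h
          rcases mul_eq_zero.mp h with h | h
          · rw [h, zero_mul]
          · rw [marg_zero p hp0 W₂ (fun a' => (h2 a').1) hpa h, mul_zero])
    rw [scale θ _ _ hθ0, scale (1-θ) _ _ hθ1'] at hls
    calc p a * (θ * W₁ a b + (1 - θ) * W₂ a b) *
          Real.log ((θ * W₁ a b + (1 - θ) * W₂ a b) /
            (θ * (∑ a', p a' * W₁ a' b) + (1 - θ) * (∑ a', p a' * W₂ a' b)))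
        = p a * ((θ * W₁ a b + (1 - θ) * W₂ a b) *
          Real.log ((θ * W₁ a b + (1 - θ) * W₂ a b) /
            (θ * (∑ a', p a' * W₁ a' b) + (1 - θ) * (∑ a', p a' * W₂ a' b)))) := by ring
      _ ≤ p a * (θ * (W₁ a b * Real.log (W₁ a b / (∑ a', p a' * W₁ a' b)))
            + (1 - θ) * (W₂ a b * Real.log (W₂ a b / (∑ a', p a' * W₂ a' b)))) :=
          mul_le_mul_of_nonneg_left hls hpa.le
      _ = θ * (p a * W₁ a b * Real.log (W₁ a b / (∑ a', p a' * W₁ a' b)))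
            + (1 - θ) * (p a * W₂ a b * Real.log (W₂ a b / (∑ a', p a' * W₂ a' b))) := by ring

end MI

section RD
variable {α β : Type*} [Fintype α] [Fintype β]

/-- the constraint set defining `RDfun`. -/
def Rset (p : α → ℝ) (d : α → β → ℝ) (D' : ℝ) : Set ℝ :=
  {r | ∃ W : α → β → ℝ, IsChannel W ∧ (∑ a, ∑ b, p a * W a b * d a b) ≤ D' ∧ r = mutInfo p W}

lemma RDfun_eq (p : α → ℝ) (d : α → β → ℝ) (D' : ℝ) : RDfun p d D' = sInf (Rset p d D') := rfl

lemma Rset_bddBelow (p : α → ℝ) (hp0 : ∀ a, 0 ≤ p a) (hp1 : ∑ a, p a = 1)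
    (d : α → β → ℝ) (D' : ℝ) : BddBelow (Rset p d D') := by
  refine ⟨0, fun r hr => ?_⟩
  obtain ⟨W, hW, _, rfl⟩ := hr
  exact mutInfo_nonneg p hp0 hp1 W hW

lemma RDfun_le (p : α → ℝ) (hp0 : ∀ a, 0 ≤ p a) (hp1 : ∑ a, p a = 1)
    (d : α → β → ℝ) {D' : ℝ} {W : α → β → ℝ} (hW : IsChannel W)
    (hWd : (∑ a, ∑ b, p a * W a b * d a b) ≤ D') :
    RDfun p d D' ≤ mutInfo p W :=
  csInf_le (Rset_bddBelow p hp0 hp1 d D') ⟨W, hW, hWd, rfl⟩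

/-- feasibility -/
def Feas (p : α → ℝ) (d : α → β → ℝ) (D' : ℝ) : Prop :=
  ∃ W : α → β → ℝ, IsChannel W ∧ (∑ a, ∑ b, p a * W a b * d a b) ≤ D'

lemma Feas_mono (p : α → ℝ) (d : α → β → ℝ) {D₁ D₂ : ℝ} (h : D₁ ≤ D₂)
    (hF : Feas p d D₁) : Feas p d D₂ := by
  obtain ⟨W, hW, hWd⟩ := hF
  exact ⟨W, hW, hWd.trans h⟩

/-- convexity inequality for the rate-distortion function. -/
lemma RDfun_convex (p : α → ℝ) (hp0 : ∀ a, 0 ≤ p a) (hp1 : ∑ a, p a = 1)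
    (d : α → β → ℝ) {D₁ D₂ : ℝ} (hF₁ : Feas p d D₁) (hF₂ : Feas p d D₂)
    {θ : ℝ} (hθ0 : 0 ≤ θ) (hθ1 : θ ≤ 1) :
    RDfun p d (θ * D₁ + (1 - θ) * D₂) ≤ θ * RDfun p d D₁ + (1 - θ) * RDfun p d D₂ := by
  have hθ1' : 0 ≤ 1 - θ := by linarith
  apply le_of_forall_pos_le_add
  intro ε hε
  have hne₁ : (Rset p d D₁).Nonempty := by
    obtain ⟨W, hW, hWd⟩ := hF₁; exact ⟨mutInfo p W, W, hW, hWd, rfl⟩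
  have hne₂ : (Rset p d D₂).Nonempty := by
    obtain ⟨W, hW, hWd⟩ := hF₂; exact ⟨mutInfo p W, W, hW, hWd, rfl⟩
  obtain ⟨r₁, hr₁, hr₁'⟩ := Real.lt_sInf_add_pos hne₁ (half_pos hε)
  obtain ⟨r₂, hr₂, hr₂'⟩ := Real.lt_sInf_add_pos hne₂ (half_pos hε)
  obtain ⟨W₁, hW₁, hW₁d, rfl⟩ := hr₁
  obtain ⟨W₂, hW₂, hW₂d, rfl⟩ := hr₂
  set Wm : α → β → ℝ := fun a b => θ * W₁ a b + (1 - θ) * W₂ a b with hWm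
  have hWmch : IsChannel Wm := by
    intro a
    constructor
    · intro b
      exact add_nonneg (mul_nonneg hθ0 ((hW₁ a).1 b)) (mul_nonneg hθ1' ((hW₂ a).1 b))
    · rw [show ∑ b, Wm a b = θ * (∑ b, W₁ a b) + (1-θ) * (∑ b, W₂ a b)
        from by rw [Finset.mul_sum, Finset.mul_sum, ← Finset.sum_add_distrib],
        (hW₁ a).2, (hW₂ a).2]; ring
  have hWmd : (∑ a, ∑ b, p a * Wm a b * d a b) ≤ θ * D₁ + (1 - θ) * D₂ := by
    have : (∑ a, ∑ b, p a * Wm a b * d a b)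
        = θ * (∑ a, ∑ b, p a * W₁ a b * d a b) + (1-θ) * (∑ a, ∑ b, p a * W₂ a b * d a b) := by
      rw [Finset.mul_sum, Finset.mul_sum, ← Finset.sum_add_distrib]
      apply Finset.sum_congr rfl; intro a _
      rw [Finset.mul_sum, Finset.mul_sum, ← Finset.sum_add_distrib]
      apply Finset.sum_congr rfl; intro b _
      simp only [hWm]; ring
    rw [this]
    have := mul_le_mul_of_nonneg_left hW₁d hθ0
    have := mul_le_mul_of_nonneg_left hW₂d hθ1'
    linarith
  calc RDfun p d (θ * D₁ + (1 - θ) * D₂) ≤ mutInfo p Wm :=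
        RDfun_le p hp0 hp1 d hWmch hWmd
    _ ≤ θ * mutInfo p W₁ + (1 - θ) * mutInfo p W₂ :=
        mutInfo_convex p hp0 W₁ W₂ hW₁ hW₂ θ hθ0 hθ1
    _ ≤ θ * (RDfun p d D₁ + ε/2) + (1 - θ) * (RDfun p d D₂ + ε/2) := by
        have := mul_le_mul_of_nonneg_left hr₁'.le hθ0
        have := mul_le_mul_of_nonneg_left hr₂'.le hθ1'
        rw [RDfun_eq, RDfun_eq]
        linarith
    _ = θ * RDfun p d D₁ + (1 - θ) * RDfun p d D₂ + ε / 2 := by ring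
    _ ≤ θ * RDfun p d D₁ + (1 - θ) * RDfun p d D₂ + ε := by linarith

end RD

section SL
variable {α β : Type*} [Fintype α] [Fintype β]

lemma support_line (p : α → ℝ) (hp0 : ∀ a, 0 ≤ p a) (hp1 : ∑ a, p a = 1)
    (d : α → β → ℝ) {D lam : ℝ} (hD : Feas p d D)
    (hlam : HasDerivAt (fun D' => RDfun p d D') (-lam) D)
    {D' : ℝ} (hD' : Feas p d D') :
    RDfun p d D - lam * (D' - D) ≤ RDfun p d D' := by
  set ρ : ℝ → ℝ := fun D'' => RDfun p d D'' with hρ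
  have hslope : Filter.Tendsto (fun t : ℝ => (ρ (D + t) - ρ D) / t)
      (𝓝[>] (0:ℝ)) (𝓝 (-lam)) := by
    have h0 := hasDerivAt_iff_tendsto_slope.mp hlam
    have hmap : Filter.Tendsto (fun t : ℝ => D + t) (𝓝[>] (0:ℝ)) (𝓝[≠] D) := by
      have h1 : Filter.Tendsto (fun t : ℝ => D + t) (𝓝[>] (0:ℝ)) (𝓝[>] D) := by
        apply tendsto_nhdsWithin_of_tendsto_nhds_of_eventually_within
        · have : Filter.Tendsto (fun t : ℝ => D + t) (𝓝 (0:ℝ)) (𝓝 (D + 0)) :=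
            (continuous_const.add continuous_id).tendsto 0
          rw [add_zero] at this
          exact this.mono_left nhdsWithin_le_nhds
        · filter_upwards [eventually_mem_nhdsWithin] with t ht
          exact Set.mem_Ioi.mpr (by simpa using ht)
      exact h1.mono_right (nhdsWithin_mono D fun y hy => ne_of_gt hy)
    have h2 := h0.comp hmap
    simp only [Function.comp_def, slope_def_field, add_sub_cancel_left] at h2
    exact h2
  rcases lt_trichotomy D' D with hlt | heq | hgt
  · -- D' < D
    set u := D - D' with hu
    have hu0 : 0 < u := by simp only [hu]; linarith
    have hev : ∀ᶠ t in 𝓝[>] (0:ℝ), (ρ D - ρ D') / u ≤ (ρ (D + t) - ρ D) / t := by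
      filter_upwards [eventually_mem_nhdsWithin] with t ht
      have ht0 : (0:ℝ) < t := ht
      have hfeast : Feas p d (D + t) := Feas_mono p d (by linarith) hD
      have hθ0 : (0:ℝ) ≤ u / (u + t) := by positivity
      have hθ1 : u / (u + t) ≤ 1 := by
        rw [div_le_one (by linarith)]; linarith
      have hconv := RDfun_convex p hp0 hp1 d hfeast hD' hθ0 hθ1
      have harg : u / (u + t) * (D + t) + (1 - u / (u + t)) * D' = D := by
        field_simp
        try ring
      rw [harg] at hconv
      rw [div_le_div_iff₀ hu0 ht0]
      have hc := mul_le_mul_of_nonneg_right hconv (by linarith : (0:ℝ) ≤ u + t)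
      have he1 : (u / (u + t) * ρ (D + t) + (1 - u / (u + t)) * ρ D') * (u + t)
          = u * ρ (D + t) + t * ρ D' := by
        field_simp
        try ring
      rw [he1] at hc
      nlinarith
    have hge := ge_of_tendsto hslope hev
    rw [div_le_iff₀ hu0] at hge
    simp only [hρ, hu] at hge
    linarith
  · rw [heq]; simp
  · -- D < D'
    have hr : 0 < D' - D := by linarith
    have hev : ∀ᶠ t in 𝓝[>] (0:ℝ), (ρ (D + t) - ρ D) / t ≤ (ρ D' - ρ D) / (D' - D) := by
      filter_upwards [Ioo_mem_nhdsGT_of_mem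
        (Set.left_mem_Ico.mpr hr)] with t ht
      obtain ⟨ht0, ht1⟩ := ht
      have hθ0 : (0:ℝ) ≤ t / (D' - D) := by positivity
      have hθ1 : t / (D' - D) ≤ 1 := by rw [div_le_one hr]; linarith
      have hconv := RDfun_convex p hp0 hp1 d hD' hD hθ0 hθ1
      have harg : t / (D' - D) * D' + (1 - t / (D' - D)) * D = D + t := by
        field_simp
        try ring
      rw [harg] at hconv
      rw [div_le_div_iff₀ ht0 hr]
      have hc := mul_le_mul_of_nonneg_right hconv hr.le
      have he1 : (t / (D' - D) * ρ D' + (1 - t / (D' - D)) * ρ D) * (D' - D)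
          = t * ρ D' + (D' - D - t) * ρ D := by
        field_simp
        try ring
      rw [he1] at hc
      nlinarith
    have hle := le_of_tendsto hslope hev
    rw [le_div_iff₀ hr] at hle
    simp only [hρ] at hle
    linarith

/-- Lagrangian global optimality. -/
lemma lagrangian_bound (p : α → ℝ) (hp0 : ∀ a, 0 ≤ p a) (hp1 : ∑ a, p a = 1)
    (d : α → β → ℝ) {D lam : ℝ}
    (Wopt : α → β → ℝ) (hWch : IsChannel Wopt)
    (hWd : (∑ a, ∑ b, p a * Wopt a b * d a b) ≤ D)
    (hlam : HasDerivAt (fun D' => RDfun p d D') (-lam) D)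
    (W : α → β → ℝ) (hW : IsChannel W) :
    RDfun p d D + lam * D ≤ mutInfo p W + lam * (∑ a, ∑ b, p a * W a b * d a b) := by
  set D' := ∑ a, ∑ b, p a * W a b * d a b with hD'
  have hfeas' : Feas p d D' := ⟨W, hW, le_refl _⟩
  have hfeasD : Feas p d D := ⟨Wopt, hWch, hWd⟩
  have h1 := support_line p hp0 hp1 d hfeasD hlam hfeas'
  have h2 : RDfun p d D' ≤ mutInfo p W := RDfun_le p hp0 hp1 d hW (le_refl _)
  nlinarith

end SL

section KEY
variable {α β : Type*} [Fintype α] [Fintype β]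

/-- partition function -/
def Zf (d : α → β → ℝ) (lam : ℝ) (Q' : β → ℝ) (x : α) : ℝ :=
  ∑ y, Q' y * Real.exp (-(lam * d x y))

lemma Zf_pos (d : α → β → ℝ) (lam : ℝ) (Q' : β → ℝ) (hQ0 : ∀ y, 0 ≤ Q' y)
    (hQ1 : ∑ y, Q' y = 1) (x : α) : 0 < Zf d lam Q' x := by
  have hy : ∃ y, 0 < Q' y := by
    by_contra h
    push_neg at h
    have : ∑ y, Q' y ≤ 0 := Finset.sum_nonpos fun y _ => h y
    linarith
  obtain ⟨y₀, hy₀⟩ := hy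
  apply Finset.sum_pos'
  · intro y _; exact mul_nonneg (hQ0 y) (Real.exp_pos _).le
  · exact ⟨y₀, Finset.mem_univ y₀, mul_pos hy₀ (Real.exp_pos _)⟩

/-- The Blahut channel bound together with Lagrangian optimality:
`R(P,D) + λ D ≤ G(Q')` for every pmf `Q'`. -/
lemma G_lower (p : α → ℝ) (hp0 : ∀ a, 0 ≤ p a) (hp1 : ∑ a, p a = 1)
    (d : α → β → ℝ) {D lam : ℝ}
    (Wopt : α → β → ℝ) (hWch : IsChannel Wopt)
    (hWd : (∑ a, ∑ b, p a * Wopt a b * d a b) ≤ D)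
    (hlam : HasDerivAt (fun D' => RDfun p d D') (-lam) D)
    (Q' : β → ℝ) (hQ0 : ∀ y, 0 ≤ Q' y) (hQ1 : ∑ y, Q' y = 1) :
    RDfun p d D + lam * D ≤ - ∑ x, p x * Real.log (Zf d lam Q' x) := by
  have hZ : ∀ x, 0 < Zf d lam Q' x := Zf_pos d lam Q' hQ0 hQ1
  set WB : α → β → ℝ := fun x y => Q' y * Real.exp (-(lam * d x y)) / Zf d lam Q' x with hWB
  have hch : IsChannel WB := by
    intro x
    constructor
    · intro y
      exact div_nonneg (mul_nonneg (hQ0 y) (Real.exp_pos _).le) (hZ x).le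
    · rw [show (∑ y, WB x y) = ∑ y, Q' y * Real.exp (-(lam * d x y)) / Zf d lam Q' x
          from Finset.sum_congr rfl fun y _ => rfl, ← Finset.sum_div]
      exact div_self (ne_of_gt (hZ x))
  have hlag := lagrangian_bound p hp0 hp1 d Wopt hWch hWd hlam WB hch
  refine hlag.trans ?_
  -- now show `L(WB) ≤ G(Q')`
  set QB : β → ℝ := fun y => ∑ a', p a' * WB a' y with hQB
  have hQBzero : ∀ y, Q' y = 0 → QB y = 0 := by
    intro y hy
    apply Finset.sum_eq_zero
    intro a' _
    simp only [hWB, hy, zero_mul, zero_div, mul_zero]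
  have hterm : ∀ x y, p x * WB x y * Real.log (WB x y / QB y) + lam * (p x * WB x y * d x y)
      = p x * WB x y * (Real.log (Q' y / QB y) - Real.log (Zf d lam Q' x)) := by
    intro x y
    rcases eq_or_lt_of_le (hp0 x) with h0 | hpx
    · rw [← h0]; ring_nf
    rcases eq_or_lt_of_le ((hch x).1 y) with h0 | hW0
    · rw [← h0]; ring_nf
    have hQ'y : 0 < Q' y := by
      rcases eq_or_lt_of_le (hQ0 y) with h | h
      · exfalso
        have : WB x y = 0 := by simp only [hWB, ← h, zero_mul, zero_div]
        rw [this] at hW0; exact lt_irrefl _ hW0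
      · exact h
    have hQBy : 0 < QB y := by
      have hle : p x * WB x y ≤ QB y :=
        Finset.single_le_sum (f := fun a' => p a' * WB a' y)
          (fun a' _ => mul_nonneg (hp0 a') ((hch a').1 y)) (Finset.mem_univ x)
      nlinarith
    have hlogWB : Real.log (WB x y) =
        Real.log (Q' y) + (-(lam * d x y)) - Real.log (Zf d lam Q' x) := by
      rw [hWB]
      rw [Real.log_div (by positivity) (ne_of_gt (hZ x)),
        Real.log_mul (ne_of_gt hQ'y) (ne_of_gt (Real.exp_pos _)), Real.log_exp]
    rw [Real.log_div (ne_of_gt hW0) (ne_of_gt hQBy),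
      Real.log_div (ne_of_gt hQ'y) (ne_of_gt hQBy), hlogWB]
    ring
  have hsum : mutInfo p WB + lam * (∑ a, ∑ b, p a * WB a b * d a b)
      = (∑ y, QB y * Real.log (Q' y / QB y)) - ∑ x, p x * Real.log (Zf d lam Q' x) := by
    unfold mutInfo
    rw [Finset.mul_sum, ← Finset.sum_add_distrib]
    have : ∀ x, (∑ b, p x * WB x b * Real.log (WB x b / (∑ a', p a' * WB a' b))
        + lam * ∑ b, p x * WB x b * d x b)
        = ∑ b, p x * WB x b * (Real.log (Q' b / QB b) - Real.log (Zf d lam Q' x)) := by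
      intro x
      rw [Finset.mul_sum, ← Finset.sum_add_distrib]
      exact Finset.sum_congr rfl fun b _ => hterm x b
    rw [Finset.sum_congr rfl fun x _ => this x]
    have hsplit : ∀ x, ∑ b, p x * WB x b * (Real.log (Q' b / QB b) - Real.log (Zf d lam Q' x))
        = (∑ b, p x * WB x b * Real.log (Q' b / QB b)) - p x * Real.log (Zf d lam Q' x) := by
      intro x
      have e0 : ∀ b, p x * WB x b * (Real.log (Q' b / QB b) - Real.log (Zf d lam Q' x))
          = p x * WB x b * Real.log (Q' b / QB b)
            - p x * WB x b * Real.log (Zf d lam Q' x) := fun b => by ring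
      rw [Finset.sum_congr rfl fun b _ => e0 b, Finset.sum_sub_distrib]
      congr 1
      have : ∑ b, p x * WB x b * Real.log (Zf d lam Q' x)
          = p x * Real.log (Zf d lam Q' x) * ∑ b, WB x b := by
        rw [Finset.mul_sum]
        exact Finset.sum_congr rfl fun b _ => by ring
      rw [this, (hch x).2, mul_one]
    rw [Finset.sum_congr rfl fun x _ => hsplit x, Finset.sum_sub_distrib]
    congr 1
    rw [Finset.sum_comm]
    apply Finset.sum_congr rfl
    intro y _
    rw [hQB, Finset.sum_mul]
  rw [hsum]
  have hgibbs : (∑ y, QB y * Real.log (Q' y / QB y)) ≤ 0 := by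
    have h := gibbs (w := QB) (q := Q')
      (fun y => Finset.sum_nonneg fun a' _ => mul_nonneg (hp0 a') ((hch a').1 y))
      hQ0 hQBzero (outMarg_sum p hp1 WB hch) (by rw [hQ1]; norm_num)
    rw [hQ1, Real.log_one] at h
    exact h
  linarith

/-- `G(Q) ≤ R(P,D) + λ D` for the optimal output marginal. -/
lemma G_upper (p : α → ℝ) (hp0 : ∀ a, 0 ≤ p a) (hp1 : ∑ a, p a = 1)
    (d : α → β → ℝ) {D lam : ℝ} (hlam0 : 0 ≤ lam)
    (Wopt : α → β → ℝ) (hWch : IsChannel Wopt)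
    (hWd : (∑ a, ∑ b, p a * Wopt a b * d a b) ≤ D)
    (hWopt : mutInfo p Wopt = RDfun p d D) :
    - ∑ x, p x * Real.log (Zf d lam (fun b => ∑ a, p a * Wopt a b) x)
      ≤ RDfun p d D + lam * D := by
  set Q : β → ℝ := fun b => ∑ a, p a * Wopt a b with hQdef
  have hQ0 : ∀ y, 0 ≤ Q y := fun y =>
    Finset.sum_nonneg fun a _ => mul_nonneg (hp0 a) ((hWch a).1 y)
  have hperx : ∀ x, p x * (- Real.log (Zf d lam Q x)) ≤
      (∑ y, p x * Wopt x y * Real.log (Wopt x y / Q y))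
        + lam * ∑ y, p x * Wopt x y * d x y := by
    intro x
    rcases eq_or_lt_of_le (hp0 x) with h0 | hpx
    · rw [← h0]
      simp only [zero_mul, neg_zero, zero_add]
      simp
    · have hac : ∀ y, Q y * Real.exp (-(lam * d x y)) = 0 → Wopt x y = 0 := by
        intro y hy
        rcases mul_eq_zero.mp hy with h | h
        · exact marg_zero p hp0 Wopt (fun a => (hWch a).1) hpx h
        · exact absurd h (ne_of_gt (Real.exp_pos _))
      have hg := gibbs (w := Wopt x) (q := fun y => Q y * Real.exp (-(lam * d x y)))
        (hWch x).1 (fun y => mul_nonneg (hQ0 y) (Real.exp_pos _).le) hac (hWch x).2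
        (Zf_pos d lam Q hQ0 (outMarg_sum p hp1 Wopt hWch) x)
      have hterm : ∀ y, Wopt x y * Real.log (Q y * Real.exp (-(lam * d x y)) / Wopt x y)
          = -(Wopt x y * Real.log (Wopt x y / Q y)) - lam * (Wopt x y * d x y) := by
        intro y
        rcases eq_or_lt_of_le ((hWch x).1 y) with h0 | hW0
        · rw [← h0]; ring_nf
        · have hQy : 0 < Q y := by
            have hle : p x * Wopt x y ≤ Q y :=
              Finset.single_le_sum (f := fun a' => p a' * Wopt a' y)
                (fun a' _ => mul_nonneg (hp0 a') ((hWch a').1 y)) (Finset.mem_univ x)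
            nlinarith
          rw [Real.log_div (by positivity) (ne_of_gt hW0),
            Real.log_mul (ne_of_gt hQy) (ne_of_gt (Real.exp_pos _)), Real.log_exp,
            Real.log_div (ne_of_gt hW0) (ne_of_gt hQy)]
          ring
      rw [Finset.sum_congr rfl fun y _ => hterm y] at hg
      rw [Finset.sum_sub_distrib, Finset.sum_neg_distrib] at hg
      have hg' : -(∑ y, Wopt x y * Real.log (Wopt x y / Q y))
          - ∑ y, lam * (Wopt x y * d x y) ≤ Real.log (Zf d lam Q x) := by
        simpa [Zf] using hg
      have hlamsum : ∑ y, lam * (Wopt x y * d x y) = lam * ∑ y, Wopt x y * d x y := by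
        rw [Finset.mul_sum]
      have h2 : - Real.log (Zf d lam Q x) ≤
          (∑ y, Wopt x y * Real.log (Wopt x y / Q y)) + lam * ∑ y, Wopt x y * d x y := by
        rw [← hlamsum]
        linarith [hg']
      have h3 := mul_le_mul_of_nonneg_left h2 hpx.le
      have e1 : ∑ y, p x * Wopt x y * Real.log (Wopt x y / Q y)
          = p x * ∑ y, Wopt x y * Real.log (Wopt x y / Q y) := by
        rw [Finset.mul_sum]
        exact Finset.sum_congr rfl fun y _ => by ring
      have e2 : ∑ y, p x * Wopt x y * d x y = p x * ∑ y, Wopt x y * d x y := by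
        rw [Finset.mul_sum]
        exact Finset.sum_congr rfl fun y _ => by ring
      calc p x * (- Real.log (Zf d lam Q x))
          ≤ p x * ((∑ y, Wopt x y * Real.log (Wopt x y / Q y))
              + lam * ∑ y, Wopt x y * d x y) := h3
        _ = (∑ y, p x * Wopt x y * Real.log (Wopt x y / Q y))
              + lam * ∑ y, p x * Wopt x y * d x y := by
            rw [e1, e2]; ring
  have hsum : - ∑ x, p x * Real.log (Zf d lam Q x)
      ≤ mutInfo p Wopt + lam * (∑ a, ∑ b, p a * Wopt a b * d a b) := by
    unfold mutInfo
    rw [Finset.mul_sum, ← Finset.sum_add_distrib, ← Finset.sum_neg_distrib]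
    apply Finset.sum_le_sum
    intro x _
    have hx := hperx x
    simp only [hQdef] at hx
    calc -(p x * Real.log (Zf d lam (fun b => ∑ a, p a * Wopt a b) x))
        = p x * - Real.log (Zf d lam (fun b => ∑ a, p a * Wopt a b) x) := by ring
      _ ≤ _ := hx
  calc - ∑ x, p x * Real.log (Zf d lam Q x)
      ≤ mutInfo p Wopt + lam * (∑ a, ∑ b, p a * Wopt a b * d a b) := hsum
    _ ≤ RDfun p d D + lam * D := by
        rw [hWopt]
        have := mul_le_mul_of_nonneg_left hWd hlam0
        linarith

end KEY

section KEY2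
variable {α β : Type*} [Fintype α] [Fintype β]

lemma key_bound (p : α → ℝ) (hp0 : ∀ a, 0 ≤ p a) (hp1 : ∑ a, p a = 1)
    (d : α → β → ℝ) {D lam : ℝ} (hlam0 : 0 ≤ lam)
    (Wopt : α → β → ℝ) (hWch : IsChannel Wopt)
    (hWd : (∑ a, ∑ b, p a * Wopt a b * d a b) ≤ D)
    (hWopt : mutInfo p Wopt = RDfun p d D)
    (hlam : HasDerivAt (fun D' => RDfun p d D') (-lam) D) (y₀ : β) :
    ∑ x, p x * Real.exp (-(lam * d x y₀)) / Zf d lam (fun b => ∑ a, p a * Wopt a b) x ≤ 1 := by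
  classical
  set Q : β → ℝ := fun b => ∑ a, p a * Wopt a b with hQdef
  have hQ0 : ∀ y, 0 ≤ Q y := fun y =>
    Finset.sum_nonneg fun a _ => mul_nonneg (hp0 a) ((hWch a).1 y)
  have hQ1 : ∑ y, Q y = 1 := outMarg_sum p hp1 Wopt hWch
  set Z : α → ℝ := fun x => Zf d lam Q x with hZdef
  have hZ : ∀ x, 0 < Z x := fun x => Zf_pos d lam Q hQ0 hQ1 x
  set e₀ : α → ℝ := fun x => Real.exp (-(lam * d x y₀)) with he₀
  have hGQ : - ∑ x, p x * Real.log (Z x) ≤ RDfun p d D + lam * D :=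
    G_upper p hp0 hp1 d hlam0 Wopt hWch hWd hWopt
  have hstep : ∀ t : ℝ, 0 < t → t ≤ 1 →
      0 ≤ ∑ x, p x * ((Z x - e₀ x) / ((1 - t) * Z x + t * e₀ x)) := by
    intro t ht0 ht1
    set Qt : β → ℝ := fun y => (1 - t) * Q y + t * (if y = y₀ then 1 else 0) with hQt
    have hQt0 : ∀ y, 0 ≤ Qt y := by
      intro y
      apply add_nonneg (mul_nonneg (by linarith) (hQ0 y))
      apply mul_nonneg ht0.le
      split <;> norm_num
    have hQt1 : ∑ y, Qt y = 1 := by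
      simp only [hQt]
      rw [Finset.sum_add_distrib, ← Finset.mul_sum, ← Finset.mul_sum, hQ1]
      simp
    have hGt := G_lower p hp0 hp1 d Wopt hWch hWd hlam Qt hQt0 hQt1
    have hZt : ∀ x, Zf d lam Qt x = (1 - t) * Z x + t * e₀ x := by
      intro x
      simp only [hZdef, he₀, Zf, hQt]
      rw [show (∑ y, ((1 - t) * Q y + t * (if y = y₀ then 1 else 0)) * Real.exp (-(lam * d x y)))
          = ∑ y, ((1 - t) * (Q y * Real.exp (-(lam * d x y)))
            + t * ((if y = y₀ then 1 else 0) * Real.exp (-(lam * d x y))))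
          from Finset.sum_congr rfl fun y _ => by ring]
      rw [Finset.sum_add_distrib, ← Finset.mul_sum, ← Finset.mul_sum]
      congr 1
      congr 1
      rw [show (∑ y, (if y = y₀ then 1 else 0) * Real.exp (-(lam * d x y)))
          = ∑ y, (if y = y₀ then Real.exp (-(lam * d x y)) else 0)
          from Finset.sum_congr rfl fun y _ => by split <;> simp]
      simp
    rw [Finset.sum_congr rfl fun x _ => congrArg (fun z => p x * Real.log z) (hZt x)] at hGt
    -- now: RDfun + lam D ≤ - ∑ p log((1-t) Z + t e₀)
    have h4 : 0 ≤ ∑ x, p x * (Real.log (Z x) - Real.log ((1 - t) * Z x + t * e₀ x)) := by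
      have he : ∑ x, p x * (Real.log (Z x) - Real.log ((1 - t) * Z x + t * e₀ x))
          = (∑ x, p x * Real.log (Z x)) - ∑ x, p x * Real.log ((1 - t) * Z x + t * e₀ x) := by
        rw [← Finset.sum_sub_distrib]
        exact Finset.sum_congr rfl fun x _ => by ring
      rw [he]
      linarith
    have hZtpos : ∀ x, 0 < (1 - t) * Z x + t * e₀ x := by
      intro x
      have h1 : 0 ≤ (1 - t) * Z x := mul_nonneg (by linarith) (hZ x).le
      have h2 : 0 < t * e₀ x := mul_pos ht0 (by simp only [he₀]; positivity)
      linarith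
    have h5 : ∀ x, p x * (Real.log (Z x) - Real.log ((1 - t) * Z x + t * e₀ x))
        ≤ p x * (t * ((Z x - e₀ x) / ((1 - t) * Z x + t * e₀ x))) := by
      intro x
      apply mul_le_mul_of_nonneg_left _ (hp0 x)
      have hls : Real.log (Z x) - Real.log ((1 - t) * Z x + t * e₀ x)
          = Real.log (Z x / ((1 - t) * Z x + t * e₀ x)) := by
        rw [Real.log_div (ne_of_gt (hZ x)) (ne_of_gt (hZtpos x))]
      rw [hls]
      have hlog := Real.log_le_sub_one_of_pos (div_pos (hZ x) (hZtpos x))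
      have hsplit : Z x / ((1 - t) * Z x + t * e₀ x)
          = (t * (Z x - e₀ x) + ((1 - t) * Z x + t * e₀ x)) / ((1 - t) * Z x + t * e₀ x) := by
        congr 1
        ring
      have hsplit2 : (t * (Z x - e₀ x) + ((1 - t) * Z x + t * e₀ x)) / ((1 - t) * Z x + t * e₀ x)
          = t * ((Z x - e₀ x) / ((1 - t) * Z x + t * e₀ x)) + 1 := by
        rw [add_div, div_self (ne_of_gt (hZtpos x)), mul_div_assoc]
      linarith [hlog, hsplit, hsplit2]
    have h6 : 0 ≤ t * ∑ x, p x * ((Z x - e₀ x) / ((1 - t) * Z x + t * e₀ x)) := by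
      have := Finset.sum_le_sum fun x (_ : x ∈ Finset.univ) => h5 x
      have he2 : ∑ x, p x * (t * ((Z x - e₀ x) / ((1 - t) * Z x + t * e₀ x)))
          = t * ∑ x, p x * ((Z x - e₀ x) / ((1 - t) * Z x + t * e₀ x)) := by
        rw [Finset.mul_sum]
        exact Finset.sum_congr rfl fun x _ => by ring
      rw [he2] at this
      linarith
    exact nonneg_of_mul_nonneg_right h6 ht0
  -- limit t → 0
  have hLnn : 0 ≤ ∑ x, p x * ((Z x - e₀ x) / Z x) := by
    set u : ℕ → ℝ := fun k => 1 / ((k : ℝ) + 1) with hu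
    have hu0 : ∀ k, 0 < u k := fun k => by positivity
    have hu1 : ∀ k, u k ≤ 1 := by
      intro k
      rw [hu]
      rw [div_le_one (by positivity)]
      simp
    have hutend : Filter.Tendsto u Filter.atTop (𝓝 0) :=
      tendsto_one_div_add_atTop_nhds_zero_nat
    have htend : Filter.Tendsto
        (fun k : ℕ => ∑ x, p x * ((Z x - e₀ x) / ((1 - u k) * Z x + u k * e₀ x)))
        Filter.atTop (𝓝 (∑ x, p x * ((Z x - e₀ x) / Z x))) := by
      apply tendsto_finset_sum
      intro x _
      have hden : Filter.Tendsto (fun k => (1 - u k) * Z x + u k * e₀ x)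
          Filter.atTop (𝓝 ((1 - 0) * Z x + 0 * e₀ x)) :=
        ((tendsto_const_nhds.sub hutend).mul_const _).add (hutend.mul_const _)
      rw [show (1 - (0:ℝ)) * Z x + 0 * e₀ x = Z x from by ring] at hden
      exact (tendsto_const_nhds.div hden (ne_of_gt (hZ x))).const_mul _
    exact ge_of_tendsto' htend fun k => hstep (u k) (hu0 k) (hu1 k)
  have hfin : ∑ x, p x * ((Z x - e₀ x) / Z x) = 1 - ∑ x, p x * e₀ x / Z x := by
    have : ∀ x, p x * ((Z x - e₀ x) / Z x) = p x - p x * e₀ x / Z x := by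
      intro x
      rw [sub_div, div_self (ne_of_gt (hZ x))]
      ring
    rw [Finset.sum_congr rfl fun x _ => this x, Finset.sum_sub_distrib, hp1]
  rw [hfin] at hLnn
  linarith

lemma key_exp (p : α → ℝ) (hp0 : ∀ a, 0 ≤ p a) (hp1 : ∑ a, p a = 1)
    (d : α → β → ℝ) {D lam : ℝ} (hlam0 : 0 ≤ lam)
    (Wopt : α → β → ℝ) (hWch : IsChannel Wopt)
    (hWd : (∑ a, ∑ b, p a * Wopt a b * d a b) ≤ D)
    (hWopt : mutInfo p Wopt = RDfun p d D)
    (hlam : HasDerivAt (fun D' => RDfun p d D') (-lam) D) (y₀ : β) :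
    ∑ x, p x * Real.exp (dtilted d D (outMarg p Wopt) lam x + lam * (D - d x y₀)) ≤ 1 := by
  have hk := key_bound p hp0 hp1 d hlam0 Wopt hWch hWd hWopt hlam y₀
  refine le_trans (le_of_eq ?_) hk
  apply Finset.sum_congr rfl
  intro x _
  have hQ0 : ∀ y, 0 ≤ (fun b => ∑ a, p a * Wopt a b) y := fun y =>
    Finset.sum_nonneg fun a _ => mul_nonneg (hp0 a) ((hWch a).1 y)
  have hQ1 : ∑ y, (fun b => ∑ a, p a * Wopt a b) y = 1 := outMarg_sum p hp1 Wopt hWch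
  have hZpos := Zf_pos d lam _ hQ0 hQ1 x
  have hS : (∑ y, outMarg p Wopt y * Real.exp (lam * D - lam * d x y))
      = Real.exp (lam * D) * Zf d lam (fun b => ∑ a, p a * Wopt a b) x := by
    simp only [Zf, outMarg]
    rw [Finset.mul_sum]
    apply Finset.sum_congr rfl
    intro y _
    rw [show lam * D - lam * d x y = lam * D + (-(lam * d x y)) from by ring, Real.exp_add]
    ring
  have hSpos : 0 < ∑ y, outMarg p Wopt y * Real.exp (lam * D - lam * d x y) := by
    rw [hS]
    exact mul_pos (Real.exp_pos _) hZpos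
  simp only [dtilted]
  rw [Real.exp_add, Real.exp_neg, Real.exp_log hSpos, hS,
    show lam * (D - d x y₀) = lam * D + (-(lam * d x y₀)) from by ring, Real.exp_add]
  rw [mul_comm (Real.exp (lam * D)) (Zf d lam (fun b => ∑ a, p a * Wopt a b) x), mul_inv]
  field_simp
end KEY2

/-- **Converse bound for the rate-distortion problem.**  Under the regularity assumptions
(`R(P,·,·)` twice differentiable near `(P,D)`, an optimal test channel `Wopt` achieving
`R(P,D)`, and `λ* = −∂R(P,D')/∂D'|_{D'=D} ≥ 0`), every `(n,M)`-code satisfies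
`P_{e,n}(D) ≥ Pr{∑ᵢ ȷ(Xᵢ|D,P) ≥ log M + nγ} − exp(−nγ)`. -/
theorem rd_converse
    {𝒳 Xh : Type} [Fintype 𝒳] [Fintype Xh]
    (P : 𝒳 → ℝ) (hP0 : ∀ x, 0 ≤ P x) (hP1 : ∑ x, P x = 1)
    (d : 𝒳 → Xh → ℝ) (hd : ∀ x y, 0 ≤ d x y) (D : ℝ)
    (hreg : ContDiffAt ℝ 2 (fun q : (𝒳 → ℝ) × ℝ => RDfun q.1 d q.2) (P, D))
    (Wopt : 𝒳 → Xh → ℝ) (hWch : IsChannel Wopt)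
    (hWd : (∑ x, ∑ y, P x * Wopt x y * d x y) ≤ D)
    (hWopt : mutInfo P Wopt = RDfun P d D)
    (lam : ℝ) (hlam : HasDerivAt (fun D' => RDfun P d D') (-lam) D) (hlam0 : 0 ≤ lam)
    (n M : ℕ) (γ : ℝ) (hγ : 0 < γ)
    (f : (Fin n → 𝒳) → Fin M) (φ : Fin M → (Fin n → Xh)) :
    Pr (iidP P n)
        {xs | Real.log M + n * γ ≤ ∑ i, dtilted d D (outMarg P Wopt) lam (xs i)}
        - Real.exp (-(n * γ)) ≤
      Pr (iidP P n) {xs | D < distn d xs (φ (f xs))} := by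
  classical
  set μ : (Fin n → 𝒳) → ℝ := iidP P n with hμ
  have hμ0 : ∀ xs, 0 ≤ μ xs := fun xs => Finset.prod_nonneg fun i _ => hP0 (xs i)
  set jj : 𝒳 → ℝ := dtilted d D (outMarg P Wopt) lam with hjj
  set A : Set (Fin n → 𝒳) := {xs | Real.log M + n * γ ≤ ∑ i, jj (xs i)} with hA
  set B : Set (Fin n → 𝒳) := {xs | D < distn d xs (φ (f xs))} with hB
  have hPrB0 : 0 ≤ Pr μ B :=
    Finset.sum_nonneg fun xs _ => Set.indicator_nonneg (fun xs _ => hμ0 xs) xs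
  have h𝒳 : Nonempty 𝒳 := by
    by_contra h
    rw [not_nonempty_iff] at h
    simp [Finset.univ_eq_empty] at hP1
  have hM : 0 < M := by
    rcases Nat.eq_zero_or_pos M with h | h
    · subst h
      exact (f (fun _ => Classical.arbitrary 𝒳)).elim0
    · exact h
  by_cases hn : n = 0
  · subst hn
    have h1 : Pr μ A ≤ 1 := by
      unfold Pr
      calc ∑ xs, A.indicator μ xs ≤ ∑ xs, μ xs :=
            Finset.sum_le_sum fun xs _ => Set.indicator_apply_le' (fun _ => le_refl _)
              (fun _ => hμ0 xs)
        _ = 1 := by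
            rw [Fintype.sum_unique]
            simp [hμ, iidP]
    simp only [Nat.cast_zero, zero_mul, neg_zero, Real.exp_zero]
    linarith
  · have hn' : (0:ℝ) < n := by
      have := Nat.pos_of_ne_zero hn
      exact_mod_cast this
    have hKEY : ∀ y, ∑ x, P x * Real.exp (jj x + lam * (D - d x y)) ≤ 1 := fun y =>
      key_exp P hP0 hP1 d hlam0 Wopt hWch hWd hWopt hlam y
    -- step 1: union bound
    have h1 : Pr μ A ≤ Pr μ (A ∩ Bᶜ) + Pr μ B := by
      unfold Pr
      rw [← Finset.sum_add_distrib]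
      apply Finset.sum_le_sum
      intro xs _
      by_cases hxA : xs ∈ A
      · rw [Set.indicator_of_mem hxA]
        by_cases hxB : xs ∈ B
        · rw [Set.indicator_of_mem hxB]
          exact le_add_of_nonneg_left (Set.indicator_nonneg (fun t _ => hμ0 t) xs)
        · rw [Set.indicator_of_mem (show xs ∈ A ∩ Bᶜ from ⟨hxA, hxB⟩)]
          exact le_add_of_nonneg_right (Set.indicator_nonneg (fun t _ => hμ0 t) xs)
      · rw [Set.indicator_of_notMem hxA]
        exact add_nonneg (Set.indicator_nonneg (fun t _ => hμ0 t) xs)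
          (Set.indicator_nonneg (fun t _ => hμ0 t) xs)
    -- step 2: Chernoff bound on A ∩ Bᶜ
    set g : Fin M → (Fin n → 𝒳) → ℝ := fun m xs =>
      Real.exp (-(Real.log M + n * γ)) *
        ∏ i, (P (xs i) * Real.exp (jj (xs i) + lam * (D - d (xs i) (φ m i)))) with hg
    have hg0 : ∀ m xs, 0 ≤ g m xs := fun m xs =>
      mul_nonneg (Real.exp_pos _).le
        (Finset.prod_nonneg fun i _ => mul_nonneg (hP0 (xs i)) (Real.exp_pos _).le)
    have hdom : ∀ xs, (A ∩ Bᶜ).indicator μ xs ≤ ∑ m, g m xs := by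
      intro xs
      by_cases hmem : xs ∈ A ∩ Bᶜ
      · rw [Set.indicator_of_mem hmem]
        obtain ⟨hxA, hxB⟩ := hmem
        have hxA' : Real.log M + n * γ ≤ ∑ i, jj (xs i) := hxA
        have hsd : ∑ i, d (xs i) (φ (f xs) i) ≤ D * n := by
          have hxB' : distn d xs (φ (f xs)) ≤ D := not_lt.mp hxB
          rw [distn, div_le_iff₀ hn'] at hxB'
          exact hxB'
        have hsum_exp : ∑ i, (jj (xs i) + lam * (D - d (xs i) (φ (f xs) i)))
            = (∑ i, jj (xs i)) + lam * ((n:ℝ) * D - ∑ i, d (xs i) (φ (f xs) i)) := by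
          rw [Finset.sum_add_distrib]
          congr 1
          rw [← Finset.mul_sum, Finset.sum_sub_distrib, Finset.sum_const,
            Finset.card_univ, Fintype.card_fin, nsmul_eq_mul]
        have hexp : g (f xs) xs = μ xs *
            Real.exp ((∑ i, jj (xs i)) + lam * ((n:ℝ) * D - ∑ i, d (xs i) (φ (f xs) i))
              - (Real.log M + n * γ)) := by
          rw [hg]
          simp only
          rw [Finset.prod_mul_distrib, ← Real.exp_sum, hsum_exp, sub_eq_add_neg,
            Real.exp_add]
          simp only [hμ, iidP]
          rw [Real.exp_sub, Real.exp_add, Real.exp_neg]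
          ring
        have hSnn : 0 ≤ (∑ i, jj (xs i)) + lam * ((n:ℝ) * D - ∑ i, d (xs i) (φ (f xs) i))
            - (Real.log M + n * γ) := by
          have h2 : 0 ≤ lam * ((n:ℝ) * D - ∑ i, d (xs i) (φ (f xs) i)) :=
            mul_nonneg hlam0 (by nlinarith [hsd])
          linarith [hxA']
        have hμg : μ xs ≤ g (f xs) xs := by
          rw [hexp]
          exact le_mul_of_one_le_right (hμ0 xs) (Real.one_le_exp hSnn)
        exact hμg.trans (Finset.single_le_sum (fun m _ => hg0 m xs) (Finset.mem_univ (f xs)))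
      · rw [Set.indicator_of_notMem hmem]
        exact Finset.sum_nonneg fun m _ => hg0 m xs
    have h2 : Pr μ (A ∩ Bᶜ) ≤ Real.exp (-(n * γ)) := by
      have hMR : (0:ℝ) < M := by exact_mod_cast hM
      calc Pr μ (A ∩ Bᶜ) ≤ ∑ xs, ∑ m, g m xs := Finset.sum_le_sum fun xs _ => hdom xs
        _ = ∑ m, ∑ xs, g m xs := Finset.sum_comm
        _ ≤ ∑ _m : Fin M, Real.exp (-(Real.log M + n * γ)) := by
            apply Finset.sum_le_sum
            intro m _
            have hfact : ∑ xs : Fin n → 𝒳,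
                ∏ i, (P (xs i) * Real.exp (jj (xs i) + lam * (D - d (xs i) (φ m i))))
                = ∏ i, ∑ x, (P x * Real.exp (jj x + lam * (D - d x (φ m i)))) :=
              (Fintype.prod_sum fun i x => P x * Real.exp (jj x + lam * (D - d x (φ m i)))).symm
            calc ∑ xs, g m xs
                = Real.exp (-(Real.log M + n * γ)) * ∑ xs : Fin n → 𝒳,
                  ∏ i, (P (xs i) * Real.exp (jj (xs i) + lam * (D - d (xs i) (φ m i)))) := by
                  rw [Finset.mul_sum]
              _ = Real.exp (-(Real.log M + n * γ)) *
                  ∏ i, ∑ x, (P x * Real.exp (jj x + lam * (D - d x (φ m i)))) := by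
                  rw [hfact]
              _ ≤ Real.exp (-(Real.log M + n * γ)) * 1 := by
                  apply mul_le_mul_of_nonneg_left _ (Real.exp_pos _).le
                  apply Finset.prod_le_one
                  · intro i _
                    exact Finset.sum_nonneg fun x _ =>
                      mul_nonneg (hP0 x) (Real.exp_pos _).le
                  · intro i _
                    exact hKEY (φ m i)
              _ = Real.exp (-(Real.log M + n * γ)) := mul_one _
        _ = M * Real.exp (-(Real.log M + n * γ)) := by
            rw [Finset.sum_const, Finset.card_univ, Fintype.card_fin, nsmul_eq_mul]
        _ = Real.exp (-(n * γ)) := by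
            rw [neg_add, Real.exp_add, Real.exp_neg, Real.exp_log hMR]
            field_simp
    linarith

end
end

section
/- Properties of the D-tilted information density: under the stated regularity assumptions, (a) R(P_X,D) = E_{X∼P_X}[ȷ(X|D,P_X)], and (b) for every x̂ ∈ X̂, E_{X∼P_X}[ exp(λ* D − λ* d(X,x̂) + ȷ(X|D,P_X)) ] ≤ 1, with equality whenever x̂ ∈ supp(P*_{X̂}). -/
/-!
Properties of the `D`-tilted information density
(Csiszár; Lemma `prop:dtilteddensity`, claims (ii) and (iii)).
-/

open scoped BigOperators

noncomputable section

/-!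
Write `L(V) = I(P, V) + λ E[d(X, V)]` for a channel `V`. Mutual information is convex in the
channel, so along the chord from `P*_{X̂|X}` to `V` the rate-distortion function lies below the
chord of `I`; differentiating at the optimum gives the Lagrangian bound `R(D) + λ D ≤ L(V)` for
every channel `V`. For an output pmf `Q`, the tilted channel `Q(x̂) exp(λD − λd(x,x̂) + ȷ_Q(x))`
has `L ≤ λ D + E[ȷ_Q(X)]`, because mutual information is at most the cross term against `Q`;
conversely Gibbs' inequality gives `L(V) ≥ λ D + E[ȷ_{Q_V}(X)]` for the output marginal `Q_V`.
Applied to the optimal channel (and `λ ≥ 0`) this yields (a), and shows that `P*_{X̂}` minimizes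
`Q ↦ E[ȷ_Q(X)]` over all pmfs. Moving mass of `P*_{X̂}` towards a point `x̂`, the one-sided
derivative of this minimum is `1 − E[exp(λD − λd(X,x̂) + ȷ(X))] ≥ 0`, which is (b). Averaged
against `P*_{X̂}` these expectations equal `1`, which forces equality on the support.
-/

open Real Filter Topology Finset

theorem sub_le_mul_log_div {w m : ℝ} (hw : 0 ≤ w) (hm : 0 ≤ m) (hwm : 0 < w → 0 < m) :
    w - m ≤ w * log (w / m) := by
  rcases hw.eq_or_lt with rfl | hw
  · simpa using hm
  have hm := hwm hw
  calc w - m = m * (w / m - 1) := by field_simp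
    _ ≤ m * (w / m * log (w / m)) :=
      mul_le_mul_of_nonneg_left (self_sub_one_le_mul_log (by positivity)) hm.le
    _ = w * log (w / m) := by field_simp

section Gibbs

variable {ι : Type*} [Fintype ι] {w m : ι → ℝ}

theorem sum_sub_sum_le_sum_mul_log_div (hw : ∀ i, 0 ≤ w i) (hm : ∀ i, 0 ≤ m i)
    (hwm : ∀ i, 0 < w i → 0 < m i) :
    ∑ i, w i - ∑ i, m i ≤ ∑ i, w i * log (w i / m i) := by
  rw [← sum_sub_distrib]
  exact sum_le_sum fun i _ => sub_le_mul_log_div (hw i) (hm i) (hwm i)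

theorem sum_mul_log_div_nonneg (hw : ∀ i, 0 ≤ w i) (hm : ∀ i, 0 ≤ m i)
    (hwm : ∀ i, 0 < w i → 0 < m i) (hsum : ∑ i, m i ≤ ∑ i, w i) :
    0 ≤ ∑ i, w i * log (w i / m i) := by
  linarith [sum_sub_sum_le_sum_mul_log_div hw hm hwm]

/-- The log-sum inequality. -/
theorem sum_mul_log_sum_div_sum_le (hw : ∀ i, 0 ≤ w i) (hm : ∀ i, 0 ≤ m i)
    (hwm : ∀ i, 0 < w i → 0 < m i) :
    (∑ i, w i) * log ((∑ i, w i) / ∑ i, m i) ≤ ∑ i, w i * log (w i / m i) := by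
  rcases (sum_nonneg fun i _ => hw i : 0 ≤ ∑ i, w i).eq_or_lt with hW | hW
  · have hw0 : ∀ i, w i = 0 := fun i =>
      (sum_eq_zero_iff_of_nonneg fun i _ => hw i).mp hW.symm i (mem_univ i)
    simp [hw0]
  set W := ∑ i, w i
  set M := ∑ i, m i
  obtain ⟨i, -, hi⟩ := exists_lt_of_sum_lt (show ∑ i, (0 : ℝ) < W by simpa using hW)
  have hM : 0 < M := (hwm i hi).trans_le (single_le_sum (fun j _ => hm j) (mem_univ i))
  -- Gibbs against the rescaled weights `m i * (W / M)`, which have the same total mass as `w`.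
  have hgibbs := sum_mul_log_div_nonneg (m := fun i => m i * (W / M)) hw
    (fun i => by have := hm i; positivity) (fun i hi => by have := hwm i hi; positivity)
    (by rw [← sum_mul, mul_div_cancel₀ _ hM.ne'])
  have hsplit : ∀ i, w i * log (w i / (m i * (W / M))) =
      w i * log (w i / m i) - w i * log (W / M) := by
    intro i
    rcases (hw i).eq_or_lt with h | h
    · simp [← h]
    · have := hwm i h
      rw [← div_div, log_div (by positivity) (by positivity)]
      ring
  simp only [hsplit, sum_sub_distrib, ← sum_mul] at hgibbs
  linarith

end Gibbs

theorem mul_log_div_convexComb_le {a₀ a₁ b₀ b₁ t : ℝ} (ha₀ : 0 ≤ a₀) (ha₁ : 0 ≤ a₁)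
    (hb₀ : 0 ≤ b₀) (hb₁ : 0 ≤ b₁) (hab₀ : 0 < a₀ → 0 < b₀) (hab₁ : 0 < a₁ → 0 < b₁)
    (ht₀ : 0 ≤ t) (ht₁ : t ≤ 1) :
    ((1 - t) * a₀ + t * a₁) * log (((1 - t) * a₀ + t * a₁) / ((1 - t) * b₀ + t * b₁)) ≤
      (1 - t) * (a₀ * log (a₀ / b₀)) + t * (a₁ * log (a₁ / b₁)) := by
  have hscale : ∀ {c a b : ℝ}, 0 ≤ c → c * a * log (c * a / (c * b)) = c * (a * log (a / b)) := by
    intro c a b hc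
    rcases hc.eq_or_lt with rfl | hc
    · simp
    · rw [mul_div_mul_left _ _ hc.ne', mul_assoc]
  have h := sum_mul_log_sum_div_sum_le (w := ![(1 - t) * a₀, t * a₁]) (m := ![(1 - t) * b₀, t * b₁])
    (Fin.forall_fin_two.mpr ⟨mul_nonneg (sub_nonneg.mpr ht₁) ha₀, mul_nonneg ht₀ ha₁⟩)
    (Fin.forall_fin_two.mpr ⟨mul_nonneg (sub_nonneg.mpr ht₁) hb₀, mul_nonneg ht₀ hb₁⟩)
    (by
      simp only [Fin.forall_fin_two, Matrix.cons_val_zero, Matrix.cons_val_one]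
      constructor
      · intro h
        exact mul_pos (pos_of_mul_pos_left h ha₀) (hab₀ (pos_of_mul_pos_right h (by linarith)))
      · intro h
        exact mul_pos (pos_of_mul_pos_left h ha₁) (hab₁ (pos_of_mul_pos_right h ht₀)))
  simpa [Fin.sum_univ_two, hscale (sub_nonneg.mpr ht₁), hscale ht₀] using h

def IsPMF {β : Type*} [Fintype β] (q : β → ℝ) : Prop :=
  (∀ b, 0 ≤ q b) ∧ ∑ b, q b = 1

def distortion {α β : Type*} [Fintype α] [Fintype β] (p : α → ℝ) (d W : α → β → ℝ) : ℝ :=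
  ∑ a, ∑ b, p a * W a b * d a b

section Channel

variable {α β : Type*} {p : α → ℝ} {W V₀ V₁ : α → β → ℝ} {t : ℝ}

theorem IsPMF.exists_pos [Fintype β] {q : β → ℝ} (hq : IsPMF q) : ∃ b, 0 < q b := by
  obtain ⟨b, -, hb⟩ := exists_lt_of_sum_lt (show ∑ b, (0 : ℝ) < ∑ b, q b by simp [hq.2])
  exact ⟨b, hb⟩

theorem IsPMF.sum_mul_exp_pos [Fintype β] {q : β → ℝ} (hq : IsPMF q) (c : β → ℝ) :
    0 < ∑ b, q b * exp (c b) := by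
  obtain ⟨b, hb⟩ := hq.exists_pos
  exact sum_pos' (fun b _ => mul_nonneg (hq.1 b) (exp_pos _).le)
    ⟨b, mem_univ b, mul_pos hb (exp_pos _)⟩

theorem IsChannel.convexComb [Fintype β] (hV₀ : IsChannel V₀) (hV₁ : IsChannel V₁) (ht₀ : 0 ≤ t)
    (ht₁ : t ≤ 1) : IsChannel ((1 - t) • V₀ + t • V₁) := by
  intro a
  refine ⟨fun b => ?_, ?_⟩
  · have := (hV₀ a).1 b
    have := (hV₁ a).1 b
    simp only [Pi.add_apply, Pi.smul_apply, smul_eq_mul]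
    nlinarith
  · simp only [Pi.add_apply, Pi.smul_apply, smul_eq_mul, sum_add_distrib, ← mul_sum,
      (hV₀ a).2, (hV₁ a).2]
    ring

theorem outMarg_convexComb [Fintype α] :
    outMarg p ((1 - t) • V₀ + t • V₁) = (1 - t) • outMarg p V₀ + t • outMarg p V₁ := by
  ext b
  simp only [outMarg, Pi.add_apply, Pi.smul_apply, smul_eq_mul, mul_sum, ← sum_add_distrib]
  exact sum_congr rfl fun a _ => by ring

variable [Fintype α] [Fintype β]

theorem outMarg_nonneg (hp : ∀ a, 0 ≤ p a) (hW : IsChannel W) (b : β) : 0 ≤ outMarg p W b :=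
  sum_nonneg fun a _ => mul_nonneg (hp a) ((hW a).1 b)

theorem outMarg_pos (hp : ∀ a, 0 ≤ p a) (hW : IsChannel W) {a : α} {b : β} (hpa : 0 < p a)
    (hWab : 0 < W a b) : 0 < outMarg p W b :=
  (mul_pos hpa hWab).trans_le
    (single_le_sum (f := fun a => p a * W a b) (fun a _ => mul_nonneg (hp a) ((hW a).1 b))
      (mem_univ a))

theorem sum_outMarg (hW : IsChannel W) : ∑ b, outMarg p W b = ∑ a, p a := by
  simp only [outMarg]
  rw [sum_comm]
  simp [← mul_sum, (hW _).2]

theorem IsPMF.outMarg (hp : IsPMF p) (hW : IsChannel W) : IsPMF (outMarg p W) :=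
  ⟨outMarg_nonneg hp.1 hW, (sum_outMarg hW).trans hp.2⟩

theorem distortion_convexComb (d : α → β → ℝ) :
    distortion p d ((1 - t) • V₀ + t • V₁) =
      (1 - t) * distortion p d V₀ + t * distortion p d V₁ := by
  simp only [distortion, Pi.add_apply, Pi.smul_apply, smul_eq_mul, mul_sum, ← sum_add_distrib]
  exact sum_congr rfl fun a _ => sum_congr rfl fun b _ => by ring

theorem mutInfo_eq_sum_outMarg :
    mutInfo p W = ∑ a, ∑ b, p a * W a b * log (W a b / outMarg p W b) := rfl

theorem mutInfo_nonneg_s5 (hp : IsPMF p) (hW : IsChannel W) : 0 ≤ mutInfo p W := by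
  rw [mutInfo_eq_sum_outMarg]
  refine sum_nonneg fun a _ => ?_
  rcases (hp.1 a).eq_or_lt with hpa | hpa
  · simp [← hpa]
  simp only [mul_assoc, ← mul_sum]
  refine mul_nonneg hpa.le (sum_mul_log_div_nonneg (hW a).1 (outMarg_nonneg hp.1 hW)
    (fun b => outMarg_pos hp.1 hW hpa) ?_)
  rw [(hp.outMarg hW).2, (hW a).2]

theorem mutInfo_convexComb_le (hp : ∀ a, 0 ≤ p a) (hV₀ : IsChannel V₀) (hV₁ : IsChannel V₁)
    (ht₀ : 0 ≤ t) (ht₁ : t ≤ 1) :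
    mutInfo p ((1 - t) • V₀ + t • V₁) ≤ (1 - t) * mutInfo p V₀ + t * mutInfo p V₁ := by
  simp only [mutInfo_eq_sum_outMarg, outMarg_convexComb, mul_sum, ← sum_add_distrib]
  refine sum_le_sum fun a _ => sum_le_sum fun b _ => ?_
  simp only [Pi.add_apply, Pi.smul_apply, smul_eq_mul]
  rcases (hp a).eq_or_lt with hpa | hpa
  · simp [← hpa]
  have h := mul_le_mul_of_nonneg_left (mul_log_div_convexComb_le ((hV₀ a).1 b) ((hV₁ a).1 b)
    (outMarg_nonneg hp hV₀ b) (outMarg_nonneg hp hV₁ b) (outMarg_pos hp hV₀ hpa)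
    (outMarg_pos hp hV₁ hpa) ht₀ ht₁) hpa.le
  linarith

theorem mutInfo_le_sum_mul_log_div (hp : IsPMF p) (hW : IsChannel W) {Q : β → ℝ} (hQ : IsPMF Q)
    (hWQ : ∀ b, 0 < outMarg p W b → 0 < Q b) :
    mutInfo p W ≤ ∑ a, ∑ b, p a * W a b * log (W a b / Q b) := by
  -- the gap is the divergence of the output marginal from `Q`
  have hsplit : ∀ a b, p a * W a b * log (W a b / Q b) =
      p a * W a b * log (W a b / outMarg p W b) + p a * W a b * log (outMarg p W b / Q b) := by
    intro a b
    rcases (mul_nonneg (hp.1 a) ((hW a).1 b)).eq_or_lt with h | h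
    · simp [← h]
    have hpa := pos_of_mul_pos_left h ((hW a).1 b)
    have hWab := pos_of_mul_pos_right h (hp.1 a)
    have hm := outMarg_pos hp.1 hW hpa hWab
    rw [← mul_add, ← log_mul (by positivity) (by have := hWQ b hm; positivity)]
    congr 2
    field_simp
  have hgibbs := sum_mul_log_div_nonneg (outMarg_nonneg hp.1 hW) hQ.1 hWQ
    (by rw [hQ.2, (hp.outMarg hW).2])
  simp only [hsplit, sum_add_distrib]
  rw [sum_comm (f := fun a b => p a * W a b * log (outMarg p W b / Q b))]
  simp only [← sum_mul]
  rw [mutInfo_eq_sum_outMarg]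
  exact le_add_of_nonneg_right hgibbs

end Channel

def tiltedChannel {α β : Type*} [Fintype β] (d : α → β → ℝ) (D : ℝ) (Q : β → ℝ) (lam : ℝ) :
    α → β → ℝ :=
  fun a b => Q b * exp (lam * D - lam * d a b + dtilted d D Q lam a)

section Tilted

variable {α β : Type*} [Fintype β] {d : α → β → ℝ} {D lam : ℝ} {Q : β → ℝ}

theorem exp_add_dtilted (hQ : IsPMF Q) (a : α) (b : β) :
    exp (lam * D - lam * d a b + dtilted d D Q lam a) =
      exp (lam * D - lam * d a b) / ∑ b', Q b' * exp (lam * D - lam * d a b') := by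
  rw [exp_add, dtilted, exp_neg, exp_log (hQ.sum_mul_exp_pos _), div_eq_mul_inv]

theorem IsPMF.isChannel_tiltedChannel (hQ : IsPMF Q) : IsChannel (tiltedChannel d D Q lam) := by
  intro a
  refine ⟨fun b => mul_nonneg (hQ.1 b) (exp_pos _).le, ?_⟩
  simp only [tiltedChannel, exp_add_dtilted hQ, mul_div_assoc', ← sum_div]
  exact div_self (hQ.sum_mul_exp_pos _).ne'

theorem log_tiltedChannel_div {a : α} {b : β} (hb : 0 < Q b) :
    log (tiltedChannel d D Q lam a b / Q b) = lam * D - lam * d a b + dtilted d D Q lam a := by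
  rw [tiltedChannel, mul_div_cancel_left₀ _ hb.ne', log_exp]

variable [Fintype α] {p : α → ℝ}

theorem sum_sum_mul_of_isChannel {W : α → β → ℝ} (hW : IsChannel W) (c : α → ℝ) :
    ∑ a, ∑ b, p a * W a b * c a = ∑ a, p a * c a :=
  sum_congr rfl fun a _ => by rw [← sum_mul, ← mul_sum, (hW a).2, mul_one]

theorem sum_mul_add_dtilted (hp : IsPMF p) (Q : β → ℝ) :
    ∑ a, p a * (lam * D + dtilted d D Q lam a) = lam * D + ∑ a, p a * dtilted d D Q lam a := by
  simp only [mul_add, sum_add_distrib, ← sum_mul, hp.2, one_mul]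

theorem mutInfo_tiltedChannel_add_le (hp : IsPMF p) (hQ : IsPMF Q) :
    mutInfo p (tiltedChannel d D Q lam) + lam * distortion p d (tiltedChannel d D Q lam) ≤
      lam * D + ∑ a, p a * dtilted d D Q lam a := by
  set T := tiltedChannel d D Q lam
  have hT : IsChannel T := hQ.isChannel_tiltedChannel
  have hterm : ∀ a b, p a * T a b * log (T a b / Q b) + lam * (p a * T a b * d a b) =
      p a * T a b * (lam * D + dtilted d D Q lam a) := by
    intro a b
    rcases (hQ.1 b).eq_or_lt with hb | hb
    · simp [T, tiltedChannel, ← hb]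
    · rw [log_tiltedChannel_div hb]
      ring
  have hcross : ∑ a, ∑ b, p a * T a b * log (T a b / Q b) + lam * distortion p d T =
      lam * D + ∑ a, p a * dtilted d D Q lam a := by
    simp only [distortion, mul_sum, ← sum_add_distrib, hterm]
    rw [sum_sum_mul_of_isChannel hT, sum_mul_add_dtilted hp]
  have hsupp : ∀ b, 0 < outMarg p T b → 0 < Q b := fun b hb => by
    by_contra hQb
    simp [outMarg, T, tiltedChannel, le_antisymm (not_lt.mp hQb) (hQ.1 b)] at hb
  linarith [mutInfo_le_sum_mul_log_div hp hT hQ hsupp]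

theorem add_sum_mul_dtilted_le_mutInfo_add (hp : IsPMF p) {V : α → β → ℝ} (hV : IsChannel V) :
    lam * D + ∑ a, p a * dtilted d D (outMarg p V) lam a ≤
      mutInfo p V + lam * distortion p d V := by
  rw [mutInfo_eq_sum_outMarg]
  set Q := outMarg p V
  set T := tiltedChannel d D Q lam
  have hT : IsChannel T := (hp.outMarg hV).isChannel_tiltedChannel
  have hterm : ∀ a b, p a * V a b * log (V a b / Q b) + lam * (p a * V a b * d a b) =
      p a * (V a b * log (V a b / T a b)) + p a * V a b * (lam * D + dtilted d D Q lam a) := by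
    intro a b
    rcases (mul_nonneg (hp.1 a) ((hV a).1 b)).eq_or_lt with h | h
    · rcases mul_eq_zero.mp h.symm with h | h <;> simp [h]
    have hpa := pos_of_mul_pos_left h ((hV a).1 b)
    have hVab := pos_of_mul_pos_right h (hp.1 a)
    have hQb : 0 < Q b := outMarg_pos hp.1 hV hpa hVab
    have hTab : 0 < T a b := mul_pos hQb (exp_pos _)
    rw [← div_mul_div_cancel₀ hTab.ne', log_mul (by positivity) (by positivity),
      log_tiltedChannel_div hQb]
    ring
  have hgibbs : ∀ a, 0 ≤ p a * ∑ b, V a b * log (V a b / T a b) := by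
    intro a
    rcases (hp.1 a).eq_or_lt with hpa | hpa
    · simp [← hpa]
    refine mul_nonneg hpa.le (sum_mul_log_div_nonneg (hV a).1 (hT a).1
      (fun b hb => mul_pos (outMarg_pos hp.1 hV hpa hb) (exp_pos _)) ?_)
    rw [(hT a).2, (hV a).2]
  simp only [distortion, mul_sum, ← sum_add_distrib, hterm]
  simp only [sum_add_distrib]
  rw [sum_sum_mul_of_isChannel hV, sum_mul_add_dtilted hp]
  simp only [← mul_sum]
  linarith [sum_nonneg fun a (_ : a ∈ univ) => hgibbs a]

end Tilted

theorem HasDerivAt.nonneg_of_eventually_ge_right {f : ℝ → ℝ} {f' x : ℝ} (hf : HasDerivAt f f' x)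
    (hmin : ∀ᶠ t in 𝓝[>] x, f x ≤ f t) : 0 ≤ f' := by
  have hslope : Tendsto (slope f x) (𝓝[>] x) (𝓝 f') :=
    (hasDerivAt_iff_tendsto_slope.mp hf).mono_left (nhdsWithin_mono _ fun t ht => ne_of_gt ht)
  refine ge_of_tendsto hslope ?_
  filter_upwards [hmin, self_mem_nhdsWithin] with t ht hxt
  rw [slope_def_field]
  exact div_nonneg (sub_nonneg.mpr ht) (sub_nonneg.mpr (le_of_lt hxt))

section RateDistortion

variable {α β : Type*} [Fintype α] [Fintype β] {p : α → ℝ} {d : α → β → ℝ}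

theorem RDfun_le_mutInfo (hp : IsPMF p) {V : α → β → ℝ} (hV : IsChannel V) {D : ℝ}
    (hVD : distortion p d V ≤ D) : RDfun p d D ≤ mutInfo p V :=
  csInf_le ⟨0, by rintro r ⟨W, hW, -, rfl⟩; exact mutInfo_nonneg_s5 hp hW⟩ ⟨V, hV, hVD, rfl⟩

theorem RDfun_add_mul_le_of_hasDerivAt (hp : IsPMF p) {D lam : ℝ} {W V : α → β → ℝ}
    (hW : IsChannel W) (hWD : distortion p d W ≤ D) (hWopt : mutInfo p W = RDfun p d D)
    (hR : HasDerivAt (fun D' => RDfun p d D') (-lam) D) (hV : IsChannel V) :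
    RDfun p d D + lam * D ≤ mutInfo p V + lam * distortion p d V := by
  set k := distortion p d V - D
  set c := mutInfo p V - RDfun p d D
  -- the chord from `W` to `V` is feasible at distortion `D + t * k`
  have hchord : ∀ t ∈ Set.Ioo (0 : ℝ) 1, RDfun p d (D + t * k) ≤ RDfun p d D + t * c := by
    intro t ht
    calc RDfun p d (D + t * k) ≤ mutInfo p ((1 - t) • W + t • V) := by
          refine RDfun_le_mutInfo hp (hW.convexComb hV ht.1.le ht.2.le) ?_
          rw [distortion_convexComb]
          nlinarith [ht.2]
      _ ≤ (1 - t) * mutInfo p W + t * mutInfo p V :=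
          mutInfo_convexComb_le hp.1 hW hV ht.1.le ht.2.le
      _ = RDfun p d D + t * c := by rw [hWopt]; ring
  have hline : HasDerivAt (fun t => RDfun p d (D + t * k)) (-lam * k) 0 := by
    simpa [Function.comp_def] using
      hR.comp_of_eq 0 (((hasDerivAt_id 0).mul_const k).const_add D) (by simp)
  have hslope := (((hasDerivAt_id (0 : ℝ)).mul_const c).sub hline).nonneg_of_eventually_ge_right
    (eventually_of_mem (Ioo_mem_nhdsGT one_pos) fun t ht => by
      simp only [Pi.sub_apply, id, zero_mul, add_zero, zero_sub]
      linarith [hchord t ht])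
  simp only [one_mul] at hslope
  linarith

end RateDistortion

section Dual

variable {α β : Type*} [Fintype α] [Fintype β] {p : α → ℝ} {d : α → β → ℝ} {D lam : ℝ}
  {Q : β → ℝ}

theorem IsPMF.convexComb_single [DecidableEq β] (hQ : IsPMF Q) (b : β) {t : ℝ} (ht₀ : 0 ≤ t)
    (ht₁ : t ≤ 1) : IsPMF ((1 - t) • Q + t • Pi.single b 1) := by
  refine ⟨fun b' => ?_, ?_⟩
  · have hsingle : 0 ≤ (Pi.single b 1 : β → ℝ) b' := by
      rw [Pi.single_apply]
      split_ifs <;> norm_num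
    exact add_nonneg (mul_nonneg (sub_nonneg.mpr ht₁) (hQ.1 b')) (mul_nonneg ht₀ hsingle)
  · simp [sum_add_distrib, ← mul_sum, hQ.2]

theorem sum_mul_exp_add_dtilted_le_one (hp : ∑ a, p a = 1) (hQ : IsPMF Q)
    (hmin : ∀ Q', IsPMF Q' →
      ∑ a, p a * dtilted d D Q lam a ≤ ∑ a, p a * dtilted d D Q' lam a) (b : β) :
    ∑ a, p a * exp (lam * D - lam * d a b + dtilted d D Q lam a) ≤ 1 := by
  classical
  set e : α → β → ℝ := fun a b => exp (lam * D - lam * d a b)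
  set Z : α → ℝ := fun a => ∑ b', Q b' * e a b'
  have hZ : ∀ a, 0 < Z a := fun a => hQ.sum_mul_exp_pos _
  set Qt : ℝ → β → ℝ := fun t => (1 - t) • Q + t • Pi.single b 1
  have hdtilted : ∀ t a, dtilted d D (Qt t) lam a = -log (Z a + t * (e a b - Z a)) := by
    intro t a
    simp only [dtilted, Qt, Pi.add_apply, Pi.smul_apply, smul_eq_mul, add_mul, sum_add_distrib,
      mul_assoc, ← mul_sum, Pi.single_apply, ite_mul, one_mul, zero_mul, sum_ite_eq', mem_univ,
      if_true, Z, e]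
    ring_nf
  have hderiv : HasDerivAt (fun t => ∑ a, p a * dtilted d D (Qt t) lam a)
      (∑ a, p a * -((e a b - Z a) / Z a)) 0 := by
    simp only [hdtilted]
    refine HasDerivAt.fun_sum fun a _ => HasDerivAt.const_mul _ ?_
    have hlin := ((hasDerivAt_id (0 : ℝ)).mul_const (e a b - Z a)).const_add (Z a)
    simpa using (hlin.log (by simp [(hZ a).ne'])).fun_neg
  have hQt0 : Qt 0 = Q := by simp [Qt]
  have hnonneg := hderiv.nonneg_of_eventually_ge_right
    (eventually_of_mem (Ioo_mem_nhdsGT one_pos) fun t ht => by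
      simpa only [hQt0] using hmin _ (hQ.convexComb_single b ht.1.le ht.2.le))
  have hsum : ∑ a, p a * -((e a b - Z a) / Z a) = 1 - ∑ a, p a * (e a b / Z a) := by
    simp only [sub_div, div_self (hZ _).ne', mul_neg, mul_sub, mul_one, sum_neg_distrib,
      sum_sub_distrib, hp]
    ring
  simp only [exp_add_dtilted hQ]
  linarith

theorem sum_mul_exp_add_dtilted_eq_one (hp : IsPMF p) (hQ : IsPMF Q)
    (hle : ∀ b, ∑ a, p a * exp (lam * D - lam * d a b + dtilted d D Q lam a) ≤ 1) {b : β}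
    (hb : 0 < Q b) : ∑ a, p a * exp (lam * D - lam * d a b + dtilted d D Q lam a) = 1 := by
  set S : β → ℝ := fun b => ∑ a, p a * exp (lam * D - lam * d a b + dtilted d D Q lam a)
  have hmarg : ∀ b, outMarg p (tiltedChannel d D Q lam) b = Q b * S b := fun b => by
    simp only [outMarg, tiltedChannel, S, mul_sum]
    exact sum_congr rfl fun a _ => by ring
  have hdefect : ∑ b, Q b * (1 - S b) = 0 := by
    have h := sum_outMarg (p := p) (hQ.isChannel_tiltedChannel (d := d) (D := D) (lam := lam))
    simp only [hmarg, hp.2] at h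
    simp only [mul_sub, mul_one, sum_sub_distrib, hQ.2, h, sub_self]
  have h := (sum_eq_zero_iff_of_nonneg fun b _ => mul_nonneg (hQ.1 b) (sub_nonneg.mpr (hle b))).mp
    hdefect b (mem_univ b)
  have := (mul_eq_zero.mp h).resolve_left hb.ne'
  linarith

end Dual

theorem dtilted_properties_general
    {𝒳 Xh : Type} [Fintype 𝒳] [Fintype Xh]
    (P : 𝒳 → ℝ) (hP0 : ∀ x, 0 ≤ P x) (hP1 : ∑ x, P x = 1)
    (d : 𝒳 → Xh → ℝ) (D : ℝ)
    (Wopt : 𝒳 → Xh → ℝ) (hWch : IsChannel Wopt)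
    (hWd : (∑ x, ∑ y, P x * Wopt x y * d x y) ≤ D)
    (hWopt : mutInfo P Wopt = RDfun P d D)
    (lam : ℝ) (hlam : HasDerivAt (fun D' => RDfun P d D') (-lam) D) (hlam0 : 0 ≤ lam) :
    (RDfun P d D = ∑ x, P x * dtilted d D (outMarg P Wopt) lam x) ∧
    (∀ yh : Xh,
      (∑ x, P x *
          Real.exp (lam * D - lam * d x yh + dtilted d D (outMarg P Wopt) lam x)) ≤ 1) ∧
    (∀ yh : Xh, 0 < outMarg P Wopt yh →
      (∑ x, P x *
          Real.exp (lam * D - lam * d x yh + dtilted d D (outMarg P Wopt) lam x)) = 1) := by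
  have hP : IsPMF P := ⟨hP0, hP1⟩
  have hQ : IsPMF (outMarg P Wopt) := hP.outMarg hWch
  have hdual : ∀ Q', IsPMF Q' → RDfun P d D ≤ ∑ x, P x * dtilted d D Q' lam x := by
    intro Q' hQ'
    have hT := hQ'.isChannel_tiltedChannel (d := d) (D := D) (lam := lam)
    linarith [RDfun_add_mul_le_of_hasDerivAt hP hWch hWd hWopt hlam hT,
      mutInfo_tiltedChannel_add_le (d := d) (D := D) (lam := lam) hP hQ']
  have hrate : RDfun P d D = ∑ x, P x * dtilted d D (outMarg P Wopt) lam x := by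
    refine le_antisymm (hdual _ hQ) ?_
    have hgibbs := add_sum_mul_dtilted_le_mutInfo_add (d := d) (D := D) (lam := lam) hP hWch
    have hcost : lam * distortion P d Wopt ≤ lam * D := mul_le_mul_of_nonneg_left hWd hlam0
    linarith
  have hle := sum_mul_exp_add_dtilted_le_one hP1 hQ fun Q' hQ' => hrate ▸ hdual Q' hQ'
  exact ⟨hrate, hle, fun yh hyh => sum_mul_exp_add_dtilted_eq_one hP hQ hle hyh⟩

/-- **Properties of the `D`-tilted information density.**  Under the regularity
assumptions, (a) `R(P,D) = E[ȷ(X|D,P)]`; (b) for every `x̂`,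
`E[exp(λ*D − λ*d(X,x̂) + ȷ(X|D,P))] ≤ 1`, with equality on the support of the optimal
output marginal `P*_{X̂}`. -/
theorem dtilted_properties
    {𝒳 Xh : Type} [Fintype 𝒳] [Fintype Xh]
    (P : 𝒳 → ℝ) (hP0 : ∀ x, 0 ≤ P x) (hP1 : ∑ x, P x = 1)
    (d : 𝒳 → Xh → ℝ) (hd : ∀ x y, 0 ≤ d x y) (D : ℝ)
    (hreg : ContDiffAt ℝ 2 (fun q : (𝒳 → ℝ) × ℝ => RDfun q.1 d q.2) (P, D))
    (Wopt : 𝒳 → Xh → ℝ) (hWch : IsChannel Wopt)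
    (hWd : (∑ x, ∑ y, P x * Wopt x y * d x y) ≤ D)
    (hWopt : mutInfo P Wopt = RDfun P d D)
    (lam : ℝ) (hlam : HasDerivAt (fun D' => RDfun P d D') (-lam) D) (hlam0 : 0 ≤ lam) :
    (RDfun P d D = ∑ x, P x * dtilted d D (outMarg P Wopt) lam x) ∧
    (∀ yh : Xh,
      (∑ x, P x *
          Real.exp (lam * D - lam * d x yh + dtilted d D (outMarg P Wopt) lam x)) ≤ 1) ∧
    (∀ yh : Xh, 0 < outMarg P Wopt yh →
      (∑ x, P x *
          Real.exp (lam * D - lam * d x yh + dtilted d D (outMarg P Wopt) lam x)) = 1) :=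
  dtilted_properties_general P hP0 hP1 d D Wopt hWch hWd hWopt lam hlam hlam0

end
end
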